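/- arXiv:2402.18037 — 12 statements merged into one kernel-verified Lean document; each statement's English description precedes it below -/
import Mathlib

section
/- Let d ≥ 1 and k ≥ 1 be natural numbers, let A : Matrix (Fin d) (Fin d) ℂ, and let λ : Fin d → ℝ be the eigenvalues of the Hermitian matrix AᴴA. Then there exists B : Matrix (Fin d) (Fin d) ℂ with Matrix.rank B ≤ k and Σ_{i,j} |B i j|² = 1 such that for every finset T of Fin d with T.card ≤ k, Σ_{i ∈ T} λ i ≤ ‖Matrix.trace (Aᴴ * B)‖². -/
/-!
Let `S` maximize `∑ i ∈ S, λ i` among index sets of size at most `k`, let `s` be that maximum,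
and let `P` be the orthogonal projection onto the span of the eigenvectors of `Aᴴ * A` indexed by
`S`. Then `tr (Aᴴ A P) = s`, and since `P` is a self-adjoint idempotent also
`‖A P‖² = tr (P Aᴴ A P) = s` (Frobenius norm). So for `s > 0` the matrix `B = A P / √s` has
rank at most `|S| ≤ k`, unit norm and `tr (Aᴴ B) = √s`, whose square dominates every sum of at
most `k` eigenvalues. If `s = 0`, all such sums are `≤ 0` and any normalized rank-one `B` works.
-/

open Matrix Unitary

theorem Finset.exists_card_le_forall_sum_le {ι β : Type*} [Fintype ι] [AddCommMonoid β]
    [LinearOrder β] (f : ι → β) (k : ℕ) :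
    ∃ S : Finset ι, S.card ≤ k ∧
      ∀ T : Finset ι, T.card ≤ k → ∑ i ∈ T, f i ≤ ∑ i ∈ S, f i := by
  obtain ⟨S, hS, hmax⟩ := Finset.exists_max_image ({T | T.card ≤ k} : Finset (Finset ι))
    (fun T => ∑ i ∈ T, f i) ⟨∅, by simp⟩
  exact ⟨S, (Finset.mem_filter.mp hS).2, fun T hT => hmax T (by simpa using hT)⟩

namespace Matrix

variable {m n 𝕜 : Type*} [RCLike 𝕜] [Fintype m] [Fintype n]

theorem ofReal_sum_sum_norm_sq_eq_trace_conjTranspose_mul_self (M : Matrix m n 𝕜) :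
    ((∑ i, ∑ j, ‖M i j‖ ^ 2 : ℝ) : 𝕜) = (Mᴴ * M).trace := by
  simp only [trace, diag_apply, mul_apply, conjTranspose_apply, RCLike.star_def,
    RCLike.conj_mul, RCLike.ofReal_sum, RCLike.ofReal_pow]
  exact Finset.sum_comm

theorem exists_rank_le_one_sum_sum_norm_sq_eq_one [Nonempty m] [Nonempty n] :
    ∃ B : Matrix m n 𝕜, B.rank ≤ 1 ∧ ∑ i, ∑ j, ‖B i j‖ ^ 2 = 1 := by
  classical
  refine ⟨vecMulVec (Pi.single (Classical.arbitrary m) 1) (Pi.single (Classical.arbitrary n) 1),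
    rank_vecMulVec_le _ _, ?_⟩
  simp [vecMulVec_apply, Pi.single_apply, apply_ite, ite_pow, Finset.sum_ite_eq']

theorem trace_conjTranspose_mul_mul_self_of_isStarProjection {P : Matrix n n 𝕜}
    (hP : IsStarProjection P) (A : Matrix m n 𝕜) :
    ((A * P)ᴴ * (A * P)).trace = (Aᴴ * A * P).trace := by
  rw [conjTranspose_mul, ← star_eq_conjTranspose P, hP.isSelfAdjoint.star_eq, Matrix.mul_assoc,
    trace_mul_comm]
  simp only [Matrix.mul_assoc, hP.isIdempotentElem.eq]

variable [DecidableEq n]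

theorem trace_conjStarAlgAut (u : unitaryGroup n 𝕜) (X : Matrix n n 𝕜) :
    (conjStarAlgAut 𝕜 _ u X).trace = X.trace := by
  rw [conjStarAlgAut_apply, trace_mul_cycle, Unitary.coe_star_mul_self, one_mul]

theorem isStarProjection_diagonal_ite_mem (S : Finset n) :
    IsStarProjection (diagonal fun i => if i ∈ S then (1 : 𝕜) else 0) := by
  refine ⟨?_, ?_⟩
  · rw [IsIdempotentElem, diagonal_mul_diagonal]
    congr! 2 with i
    by_cases hi : i ∈ S <;> simp [hi]
  · rw [IsSelfAdjoint, star_eq_conjTranspose, diagonal_conjTranspose]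
    congr! 2 with i
    by_cases hi : i ∈ S <;> simp [hi]

namespace IsHermitian

variable {H : Matrix n n 𝕜} (hH : H.IsHermitian)
include hH

noncomputable def eigenprojection (S : Finset n) : Matrix n n 𝕜 :=
  conjStarAlgAut 𝕜 _ hH.eigenvectorUnitary (diagonal fun i => if i ∈ S then 1 else 0)

theorem isStarProjection_eigenprojection (S : Finset n) :
    IsStarProjection (hH.eigenprojection S) :=
  (isStarProjection_diagonal_ite_mem S).map _

theorem rank_eigenprojection_le (S : Finset n) : (hH.eigenprojection S).rank ≤ S.card := by
  classical
  calc (hH.eigenprojection S).rank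
      ≤ (diagonal fun i => if i ∈ S then (1 : 𝕜) else 0).rank :=
        (rank_mul_le_left _ _).trans (rank_mul_le_right _ _)
    _ = S.card := by simp [rank_diagonal]

theorem trace_mul_eigenprojection (S : Finset n) :
    (H * hH.eigenprojection S).trace = ∑ i ∈ S, (hH.eigenvalues i : 𝕜) := by
  conv_lhs => arg 1; arg 1; rw [hH.spectral_theorem]
  rw [eigenprojection, ← map_mul, trace_conjStarAlgAut, diagonal_mul_diagonal, trace_diagonal]
  simp [Finset.sum_ite_mem]

end IsHermitian

theorem exists_rank_le_sum_sum_norm_sq_eq_one_trace_eq_sqrt (A : Matrix m n 𝕜)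
    (hA : (Aᴴ * A).IsHermitian) {S : Finset n} (hS : 0 < ∑ i ∈ S, hA.eigenvalues i) :
    ∃ B : Matrix m n 𝕜, B.rank ≤ S.card ∧ ∑ i, ∑ j, ‖B i j‖ ^ 2 = 1 ∧
      (Aᴴ * B).trace = √(∑ i ∈ S, hA.eigenvalues i) := by
  set s := ∑ i ∈ S, hA.eigenvalues i
  have hc : (√s : 𝕜) ≠ 0 := RCLike.ofReal_ne_zero.mpr (Real.sqrt_pos.mpr hS).ne'
  have hcc : (√s : 𝕜) * √s = s := by rw [← RCLike.ofReal_mul, Real.mul_self_sqrt hS.le]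
  have htr : (Aᴴ * A * hA.eigenprojection S).trace = s := by
    rw [hA.trace_mul_eigenprojection, RCLike.ofReal_sum]
  refine ⟨(√s : 𝕜)⁻¹ • (A * hA.eigenprojection S), ?_, ?_, ?_⟩
  · rw [rank_smul_of_mem_nonZeroDivisors _ (mem_nonZeroDivisors_of_ne_zero (inv_ne_zero hc))]
    exact (rank_mul_le_right _ _).trans (hA.rank_eigenprojection_le S)
  · apply RCLike.ofReal_injective (K := 𝕜)
    rw [ofReal_sum_sum_norm_sq_eq_trace_conjTranspose_mul_self, conjTranspose_smul, star_inv₀,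
      RCLike.star_def, RCLike.conj_ofReal, Matrix.smul_mul, Matrix.mul_smul, smul_smul, trace_smul,
      trace_conjTranspose_mul_mul_self_of_isStarProjection (hA.isStarProjection_eigenprojection S),
      htr, ← hcc, smul_eq_mul, RCLike.ofReal_one]
    field_simp
  · rw [Matrix.mul_smul, trace_smul, ← Matrix.mul_assoc, htr, smul_eq_mul, ← hcc]
    field_simp

end Matrix

/-- For `d, k ≥ 1` and `A : Matrix (Fin d) (Fin d) ℂ`, with
`hA.eigenvalues` the eigenvalues of the Hermitian matrix `Aᴴ * A`, there exists a
normalized matrix `B` of rank at most `k` such that for every finset `T` with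
`T.card ≤ k` one has `∑ i ∈ T, eigenvalue i ≤ ‖trace (Aᴴ * B)‖²`. -/
theorem exists_rank_le_norm_one_sum_eigenvalues_le_trace_sq
    (d k : ℕ) (hd : 1 ≤ d) (hk : 1 ≤ k)
    (A : Matrix (Fin d) (Fin d) ℂ)
    (hA : (Aᴴ * A).IsHermitian) :
    ∃ B : Matrix (Fin d) (Fin d) ℂ, B.rank ≤ k ∧
      (∑ i : Fin d, ∑ j : Fin d, ‖B i j‖ ^ 2 = 1) ∧
      ∀ T : Finset (Fin d), T.card ≤ k →
        ∑ i ∈ T, hA.eigenvalues i ≤ ‖Matrix.trace (Aᴴ * B)‖ ^ 2 := by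
  obtain ⟨S, hSk, hSmax⟩ := Finset.exists_card_le_forall_sum_le hA.eigenvalues k
  have hs₀ : 0 ≤ ∑ i ∈ S, hA.eigenvalues i :=
    Finset.sum_nonneg fun i _ => eigenvalues_conjTranspose_mul_self_nonneg A i
  rcases hs₀.eq_or_lt with hs | hs
  · have : Nonempty (Fin d) := ⟨⟨0, hd⟩⟩
    obtain ⟨B, hrank, hnorm⟩ :
        ∃ B : Matrix (Fin d) (Fin d) ℂ, B.rank ≤ 1 ∧ ∑ i, ∑ j, ‖B i j‖ ^ 2 = 1 :=
      exists_rank_le_one_sum_sum_norm_sq_eq_one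
    exact ⟨B, hrank.trans hk, hnorm, fun T hT =>
      (hSmax T hT).trans (hs.symm.le.trans (by positivity))⟩
  · obtain ⟨B, hrank, hnorm, htr⟩ :=
      exists_rank_le_sum_sum_norm_sq_eq_one_trace_eq_sqrt A hA hs
    refine ⟨B, hrank.trans hSk, hnorm, fun T hT => ?_⟩
    rw [htr, RCLike.norm_ofReal, sq_abs, Real.sq_sqrt hs.le]
    exact hSmax T hT
end

section
/- Let d ≥ 2 and β ∈ ℝ. Then the following are equivalent: (i) for every ψ : Fin d × Fin d → ℂ with Σ_{i,j} |ψ (i,j)|² = 1 such that the matrix X(ψ) : Matrix (Fin d) (Fin d) ℂ, X(ψ) i j = ψ (i,j), has Matrix.rank X(ψ) ≤ 2, one has 0 ≤ 1 + β · ‖Σ_i ψ (i,i)‖²; (ii) β ≥ -1/2. (In the paper's terms: the Werner state ρ_w with parameter β is 1-undistillable iff β ≥ -1/2.) -/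
/-!
For a square matrix `X` of rank `r`, `tr X = ∑ₖ ⟪bₖ, X bₖ⟫` for an orthonormal basis `b` of the
range of `X`. Each term is bounded by `‖X bₖ‖`, and Bessel's inequality applied to the rows of `X`
gives `∑ₖ ‖X bₖ‖² ≤ ‖X‖_F²`, so by Cauchy–Schwarz `|tr X|² ≤ r ‖X‖_F²`. For a normalized `ψ` of
Schmidt rank at most `2` this bounds `|∑ᵢ ψ(i,i)|²` by `2`, which `ψ = (e₀₀ + e₁₁)/√2` attains;
hence the condition holds iff `1 + 2β ≥ 0`.
-/

open Module Matrix
open scoped InnerProductSpace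

namespace LinearMap

variable {𝕜 E ι : Type*} [RCLike 𝕜] [NormedAddCommGroup E] [InnerProductSpace 𝕜 E]
  [FiniteDimensional 𝕜 E] [Fintype ι]

theorem trace_eq_sum_inner_of_range (T : E →ₗ[𝕜] E) (b : OrthonormalBasis ι 𝕜 (range T)) :
    trace 𝕜 E T = ∑ k, ⟪(b k : E), T (b k)⟫_𝕜 := by
  have hT : T = (range T).subtype ∘ₗ T.rangeRestrict := rfl
  conv_lhs => rw [hT]
  rw [trace_comp_comm', trace_eq_sum_inner _ b]
  rfl

theorem norm_trace_sq_le (T : E →ₗ[𝕜] E) (b : OrthonormalBasis ι 𝕜 (range T)) :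
    ‖trace 𝕜 E T‖ ^ 2 ≤ finrank 𝕜 (range T) * ∑ k, ‖T (b k)‖ ^ 2 := by
  have hle : ‖trace 𝕜 E T‖ ≤ ∑ k, ‖T (b k)‖ := by
    rw [trace_eq_sum_inner_of_range T b]
    refine (norm_sum_le _ _).trans (Finset.sum_le_sum fun k _ => ?_)
    calc ‖⟪(b k : E), T (b k)⟫_𝕜‖ ≤ ‖(b k : E)‖ * ‖T (b k)‖ := norm_inner_le_norm _ _
      _ = ‖T (b k)‖ := by rw [Submodule.norm_coe, b.norm_eq_one, one_mul]
  calc ‖trace 𝕜 E T‖ ^ 2 ≤ (∑ k, ‖T (b k)‖) ^ 2 := by gcongr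
    _ ≤ Fintype.card ι * ∑ k, ‖T (b k)‖ ^ 2 := by
      simpa using sq_sum_le_card_mul_sum_sq (s := Finset.univ) (f := fun k => ‖T (b k)‖)
    _ = finrank 𝕜 (range T) * ∑ k, ‖T (b k)‖ ^ 2 := by
      rw [finrank_eq_card_basis b.toBasis]

end LinearMap

namespace Matrix

variable {𝕜 m n ι : Type*} [RCLike 𝕜] [Fintype m] [Fintype n] [DecidableEq n] [Fintype ι]

theorem trace_eq_trace_toEuclideanLin (A : Matrix n n 𝕜) :
    A.trace = LinearMap.trace 𝕜 _ (toEuclideanLin A) := by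
  rw [toEuclideanLin_eq_toLin_orthonormal, LinearMap.trace_eq_matrix_trace 𝕜
    (EuclideanSpace.basisFun n 𝕜).toBasis, LinearMap.toMatrix_toLin]

theorem rank_eq_finrank_range_toEuclideanLin (A : Matrix m n 𝕜) :
    A.rank = finrank 𝕜 (LinearMap.range (toEuclideanLin A)) := by
  rw [toEuclideanLin_eq_toLin_orthonormal]
  exact rank_eq_finrank_range_toLin A (EuclideanSpace.basisFun m 𝕜).toBasis
    (EuclideanSpace.basisFun n 𝕜).toBasis

theorem sum_norm_toEuclideanLin_sq_le (A : Matrix m n 𝕜) {v : ι → EuclideanSpace 𝕜 n}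
    (hv : Orthonormal 𝕜 v) : ∑ k, ‖toEuclideanLin A (v k)‖ ^ 2 ≤ ∑ i, ∑ j, ‖A i j‖ ^ 2 := by
  have hrow : ∀ i k, (toEuclideanLin A (v k)) i = ⟪WithLp.toLp 2 (star (A i)), v k⟫_𝕜 := by
    intro i k
    simp [PiLp.inner_apply, mulVec, dotProduct, mul_comm]
  calc ∑ k, ‖toEuclideanLin A (v k)‖ ^ 2
      = ∑ i, ∑ k, ‖⟪v k, WithLp.toLp 2 (star (A i))⟫_𝕜‖ ^ 2 := by
        simp_rw [EuclideanSpace.norm_sq_eq, hrow, norm_inner_symm]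
        exact Finset.sum_comm
    _ ≤ ∑ i, ‖WithLp.toLp 2 (star (A i))‖ ^ 2 :=
        Finset.sum_le_sum fun i _ => hv.sum_inner_products_le _
    _ = ∑ i, ∑ j, ‖A i j‖ ^ 2 := by simp [EuclideanSpace.norm_sq_eq]

theorem norm_trace_sq_le_rank_mul_sum_norm_sq (A : Matrix n n 𝕜) :
    ‖A.trace‖ ^ 2 ≤ A.rank * ∑ i, ∑ j, ‖A i j‖ ^ 2 := by
  set T := toEuclideanLin A
  let b := stdOrthonormalBasis 𝕜 (LinearMap.range T)
  have hb : Orthonormal 𝕜 fun k => (b k : EuclideanSpace 𝕜 n) :=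
    b.orthonormal.comp_linearIsometry (LinearMap.range T).subtypeₗᵢ
  rw [trace_eq_trace_toEuclideanLin, rank_eq_finrank_range_toEuclideanLin]
  calc ‖LinearMap.trace 𝕜 _ T‖ ^ 2
      ≤ finrank 𝕜 (LinearMap.range T) * ∑ k, ‖T (b k)‖ ^ 2 := T.norm_trace_sq_le b
    _ ≤ finrank 𝕜 (LinearMap.range T) * ∑ i, ∑ j, ‖A i j‖ ^ 2 := by
      gcongr
      exact sum_norm_toEuclideanLin_sq_le A hb

theorem exists_rank_le_sum_norm_sq_eq_one_norm_trace_sq_eq {k : ℕ} (hk : 0 < k)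
    (hkn : k ≤ Fintype.card n) :
    ∃ A : Matrix n n 𝕜, A.rank ≤ k ∧ ∑ i, ∑ j, ‖A i j‖ ^ 2 = 1 ∧ ‖A.trace‖ ^ 2 = k := by
  classical
  obtain ⟨s, -, rfl⟩ := Finset.exists_subset_card_eq (s := Finset.univ) (by simpa using hkn)
  set c : 𝕜 := (((Real.sqrt s.card)⁻¹ : ℝ) : 𝕜)
  have hc : ‖c‖ ^ 2 = (s.card : ℝ)⁻¹ := by
    rw [RCLike.norm_ofReal, sq_abs, inv_pow, Real.sq_sqrt (Nat.cast_nonneg _)]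
  refine ⟨diagonal fun i => if i ∈ s then c else 0, ?_, ?_, ?_⟩
  · rw [rank_diagonal, Fintype.card_subtype]
    exact Finset.card_le_card fun i => by simp +contextual
  · simp [diagonal_apply, apply_ite (‖·‖ ^ 2), hc, Finset.sum_ite_mem, hk.ne']
  · rw [trace_diagonal, Finset.sum_ite_mem, Finset.univ_inter, Finset.sum_const, nsmul_eq_mul,
      norm_mul, mul_pow, hc, RCLike.norm_natCast]
    field_simp

end Matrix

/-- For `d ≥ 2` and `β : ℝ`, the Werner state with parameter `β` is
1-undistillable iff `β ≥ -1/2`: nonnegativity of `1 + β‖∑ i, ψ(i,i)‖²` over all normalized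
`ψ` whose associated matrix has rank at most 2 is equivalent to `β ≥ -1/2`. -/
theorem werner_one_undistillable_iff
    (d : ℕ) (hd : 2 ≤ d) (β : ℝ) :
    (∀ ψ : Fin d × Fin d → ℂ,
        (∑ p : Fin d × Fin d, ‖ψ p‖ ^ 2 = 1) →
        Matrix.rank (Matrix.of fun i j : Fin d => ψ (i, j)) ≤ 2 →
        0 ≤ 1 + β * ‖∑ i : Fin d, ψ (i, i)‖ ^ 2) ↔
      β ≥ -1 / 2 := by
  constructor
  · intro h
    obtain ⟨A, hrank, hnorm, htrace⟩ :=
      exists_rank_le_sum_norm_sq_eq_one_norm_trace_sq_eq (𝕜 := ℂ) (n := Fin d) two_pos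
        (by simpa using hd)
    have hA := h (fun p => A p.1 p.2) (by rwa [Fintype.sum_prod_type]) hrank
    change 0 ≤ 1 + β * ‖A.trace‖ ^ 2 at hA
    rw [htrace] at hA
    push_cast at hA
    linarith
  · intro hβ ψ hnorm hrank
    have htrace := norm_trace_sq_le_rank_mul_sum_norm_sq (Matrix.of fun i j : Fin d => ψ (i, j))
    change _ ≤ _ * ∑ i, ∑ j, ‖ψ (i, j)‖ ^ 2 at htrace
    rw [← Fintype.sum_prod_type', hnorm, mul_one] at htrace
    have htrace_le_two : ‖∑ i : Fin d, ψ (i, i)‖ ^ 2 ≤ 2 := htrace.trans (by exact_mod_cast hrank)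
    nlinarith [sq_nonneg ‖∑ i : Fin d, ψ (i, i)‖]
end

section
/- Let d ≥ 1 and β ∈ ℝ. Then the following are equivalent: (i) for every ψ : Fin d × Fin d → ℂ, 0 ≤ Σ_{i,j} |ψ (i,j)|² + β · ‖Σ_i ψ (i,i)‖²; (ii) β ≥ -1/d. (In the paper's terms: the partial transpose of the Werner state ρ_w is positive semidefinite iff β ≥ -1/d; i.e., ρ_w is NPT iff β < -1/d.) -/
/-!
By Cauchy–Schwarz, `‖∑ i, ψ (i, i)‖² ≤ d ∑ i, ‖ψ (i, i)‖² ≤ d ∑ p, ‖ψ p‖²`, so the form is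
nonnegative as soon as `β ≥ -1/d`. The maximally entangled vector `ψ (i, j) = δᵢⱼ` attains
equality in both steps and evaluates the form to `d + β d²`, which forces `β ≥ -1/d`.
-/

open Finset

variable {ι : Type*} [Fintype ι]

theorem sum_diag_le_sum {f : ι × ι → ℝ} (hf : ∀ p, 0 ≤ f p) : ∑ i, f (i, i) ≤ ∑ p, f p := by
  rw [Fintype.sum_prod_type]
  exact sum_le_sum fun i _ => single_le_sum (fun j _ => hf (i, j)) (mem_univ i)

section SeminormedAddCommGroup

variable {E : Type*} [SeminormedAddCommGroup E]

theorem norm_sum_sq_le_card_mul_sum_norm_sq (f : ι → E) :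
    ‖∑ i, f i‖ ^ 2 ≤ Fintype.card ι * ∑ i, ‖f i‖ ^ 2 :=
  calc ‖∑ i, f i‖ ^ 2 ≤ (∑ i, ‖f i‖) ^ 2 := by gcongr; exact norm_sum_le _ _
    _ ≤ Fintype.card ι * ∑ i, ‖f i‖ ^ 2 := by
      simpa using sq_sum_le_card_mul_sum_sq (s := univ) (f := fun i => ‖f i‖)

theorem norm_sum_diag_sq_le (ψ : ι × ι → E) :
    ‖∑ i, ψ (i, i)‖ ^ 2 ≤ Fintype.card ι * ∑ p, ‖ψ p‖ ^ 2 :=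
  (norm_sum_sq_le_card_mul_sum_norm_sq _).trans <| by
    gcongr
    exact sum_diag_le_sum fun p => sq_nonneg ‖ψ p‖

theorem sum_norm_sq_add_mul_norm_sum_diag_sq_nonneg [Nonempty ι] {β : ℝ}
    (hβ : -1 / Fintype.card ι ≤ β) (ψ : ι × ι → E) :
    0 ≤ ∑ p, ‖ψ p‖ ^ 2 + β * ‖∑ i, ψ (i, i)‖ ^ 2 := by
  have hn : (0 : ℝ) < Fintype.card ι := by exact_mod_cast Fintype.card_pos
  calc 0 ≤ ∑ p, ‖ψ p‖ ^ 2 - ‖∑ i, ψ (i, i)‖ ^ 2 / Fintype.card ι := by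
        rw [sub_nonneg, div_le_iff₀ hn, mul_comm]
        exact norm_sum_diag_sq_le ψ
    _ = ∑ p, ‖ψ p‖ ^ 2 + -1 / Fintype.card ι * ‖∑ i, ψ (i, i)‖ ^ 2 := by ring
    _ ≤ ∑ p, ‖ψ p‖ ^ 2 + β * ‖∑ i, ψ (i, i)‖ ^ 2 := by gcongr

end SeminormedAddCommGroup

section RCLike

variable {𝕜 : Type*} [RCLike 𝕜]

theorem neg_inv_card_le_of_forall_nonneg [DecidableEq ι] [Nonempty ι] {β : ℝ}
    (h : ∀ ψ : ι × ι → 𝕜, 0 ≤ ∑ p, ‖ψ p‖ ^ 2 + β * ‖∑ i, ψ (i, i)‖ ^ 2) :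
    -1 / Fintype.card ι ≤ β := by
  have hn : (0 : ℝ) < Fintype.card ι := by exact_mod_cast Fintype.card_pos
  set δ : ι × ι → 𝕜 := fun p => if p.1 = p.2 then 1 else 0
  have h_norm : ∑ p, ‖δ p‖ ^ 2 = Fintype.card ι := by
    rw [Fintype.sum_prod_type]
    simp [δ, apply_ite (‖·‖ ^ 2)]
  have h_trace : ‖∑ i, δ (i, i)‖ ^ 2 = (Fintype.card ι : ℝ) ^ 2 := by simp [δ]
  have h_entangled := h δ
  rw [h_norm, h_trace] at h_entangled
  rw [div_le_iff₀ hn]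
  nlinarith

theorem forall_sum_norm_sq_add_mul_norm_sum_diag_sq_nonneg_iff [Nonempty ι] (β : ℝ) :
    (∀ ψ : ι × ι → 𝕜, 0 ≤ ∑ p, ‖ψ p‖ ^ 2 + β * ‖∑ i, ψ (i, i)‖ ^ 2) ↔
      -1 / Fintype.card ι ≤ β := by
  classical
  exact ⟨neg_inv_card_le_of_forall_nonneg, sum_norm_sq_add_mul_norm_sum_diag_sq_nonneg⟩

end RCLike

/-- For `d ≥ 1` and `β : ℝ`, the partial transpose of the Werner state
with parameter `β` is positive semidefinite iff `β ≥ -1/d`: nonnegativity of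
`∑ |ψ(i,j)|² + β‖∑ i, ψ(i,i)‖²` for all `ψ` is equivalent to `β ≥ -1/d`. -/
theorem werner_ppt_iff
    (d : ℕ) (hd : 1 ≤ d) (β : ℝ) :
    (∀ ψ : Fin d × Fin d → ℂ,
        0 ≤ (∑ p : Fin d × Fin d, ‖ψ p‖ ^ 2) + β * ‖∑ i : Fin d, ψ (i, i)‖ ^ 2) ↔
      β ≥ -1 / (d : ℝ) := by
  have : Nonempty (Fin d) := ⟨⟨0, hd⟩⟩
  simpa using forall_sum_norm_sq_add_mul_norm_sum_diag_sq_nonneg_iff (ι := Fin d) (𝕜 := ℂ) β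
end

section
/- Let d ≥ 3 and let β ∈ ℝ satisfy -1/2 ≤ β and β < -1/d. Then both of the following hold: (a) for every ψ : Fin d × Fin d → ℂ with Σ_{i,j} |ψ (i,j)|² = 1 and Matrix.rank of the matrix X(ψ) i j = ψ (i,j) at most 2, one has 0 ≤ 1 + β · ‖Σ_i ψ (i,i)‖²; and (b) there exists φ : Fin d × Fin d → ℂ with Σ_{i,j} |φ (i,j)|² + β · ‖Σ_i φ (i,i)‖² < 0. (In the paper's terms: for d > 2 every β in [-1/2, -1/d) gives a Werner state that is simultaneously NPT and 1-undistillable.) -/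
/-!
If the columns `c_j` of `X` lie in a subspace `W` with orthonormal basis `(b_k)_{k < r}`, then
`tr X = ∑_{j,k} ⟪b_k, c_j⟫ (b_k)_j`, and Cauchy–Schwarz over the pairs `(j, k)` together with
Parseval gives `|tr X|² ≤ r ‖X‖²_F`. For a normalized `ψ` of Schmidt rank at most `2` this bounds
`|∑_i ψ(i,i)|²` by `2`, whence `1 + β |∑_i ψ(i,i)|² ≥ 1 + 2β ≥ 0`. The maximally entangled vector
`φ(i,j) = δ_ij` has `⟨φ|1 + βG|φ⟩ = d + β d²`, which is negative exactly when `β < -1/d`.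
-/

open scoped InnerProductSpace Matrix
open Module

variable {𝕜 n : Type*} [RCLike 𝕜] [Fintype n]

theorem norm_sum_mul_sq_le {ι : Type*} (s : Finset ι) (f g : ι → 𝕜) :
    ‖∑ i ∈ s, f i * g i‖ ^ 2 ≤ (∑ i ∈ s, ‖f i‖ ^ 2) * ∑ i ∈ s, ‖g i‖ ^ 2 :=
  calc ‖∑ i ∈ s, f i * g i‖ ^ 2 ≤ (∑ i ∈ s, ‖f i‖ * ‖g i‖) ^ 2 := by
        gcongr
        exact (norm_sum_le _ _).trans_eq (by simp_rw [norm_mul])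
    _ ≤ _ := Finset.sum_mul_sq_le_sq_mul_sq s _ _

theorem norm_sum_apply_self_sq_le_finrank_mul (W : Submodule 𝕜 (EuclideanSpace 𝕜 n))
    (v : n → EuclideanSpace 𝕜 n) (hv : ∀ j, v j ∈ W) :
    ‖∑ j, v j j‖ ^ 2 ≤ finrank 𝕜 W * ∑ j, ‖v j‖ ^ 2 := by
  let b := stdOrthonormalBasis 𝕜 W
  let e : Fin (finrank 𝕜 W) → EuclideanSpace 𝕜 n := fun k => b k
  have hexpand (j : n) : v j = ∑ k, ⟪e k, v j⟫_𝕜 • e k := by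
    simpa using (congrArg Subtype.val (b.sum_repr' ⟨v j, hv j⟩)).symm
  have hparseval (j : n) : ∑ k, ‖⟪e k, v j⟫_𝕜‖ ^ 2 = ‖v j‖ ^ 2 :=
    b.sum_sq_norm_inner_right ⟨v j, hv j⟩
  have hunit (k : Fin (finrank 𝕜 W)) : ∑ j, ‖e k j‖ ^ 2 = 1 := by
    rw [← EuclideanSpace.norm_sq_eq, ← W.coe_norm, b.orthonormal.1 k, one_pow]
  calc ‖∑ j, v j j‖ ^ 2 = ‖∑ p : n × Fin (finrank 𝕜 W), ⟪e p.2, v p.1⟫_𝕜 * e p.2 p.1‖ ^ 2 := by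
        rw [Fintype.sum_prod_type]
        congr 2
        refine Finset.sum_congr rfl fun j _ => ?_
        conv_lhs => rw [hexpand j]
        simp
    _ ≤ (∑ p : n × Fin (finrank 𝕜 W), ‖⟪e p.2, v p.1⟫_𝕜‖ ^ 2) *
          ∑ p : n × Fin (finrank 𝕜 W), ‖e p.2 p.1‖ ^ 2 :=
        norm_sum_mul_sq_le _ _ _
    _ = finrank 𝕜 W * ∑ j, ‖v j‖ ^ 2 := by
        rw [Fintype.sum_prod_type, Fintype.sum_prod_type_right]
        simp [hparseval, hunit, mul_comm]

theorem Matrix.finrank_span_cols_toLp (X : Matrix n n 𝕜) :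
    finrank 𝕜 (Submodule.span 𝕜 (Set.range fun j => WithLp.toLp 2 (Xᵀ j))) = X.rank := by
  rw [X.rank_eq_finrank_span_cols, ← LinearEquiv.finrank_map_eq (WithLp.linearEquiv 2 𝕜 (n → 𝕜)),
    Submodule.map_span, ← Set.range_comp]
  rfl

theorem Matrix.norm_trace_sq_le_rank_mul (X : Matrix n n 𝕜) :
    ‖X.trace‖ ^ 2 ≤ X.rank * ∑ i, ∑ j, ‖X i j‖ ^ 2 := by
  have h := norm_sum_apply_self_sq_le_finrank_mul
    (Submodule.span 𝕜 (Set.range fun j => WithLp.toLp 2 (Xᵀ j))) _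
    fun j => Submodule.subset_span (Set.mem_range_self j)
  rw [X.finrank_span_cols_toLp] at h
  rw [Finset.sum_comm]
  simpa [EuclideanSpace.norm_sq_eq, Matrix.trace] using h

/-- For `d ≥ 3` and `β ∈ [-1/2, -1/d)`, the Werner state with parameter
`β` is simultaneously 1-undistillable (part (a)) and NPT (part (b)). -/
theorem werner_npt_and_one_undistillable
    (d : ℕ) (hd : 3 ≤ d) (β : ℝ) (hβ₁ : -1 / 2 ≤ β) (hβ₂ : β < -1 / (d : ℝ)) :
    (∀ ψ : Fin d × Fin d → ℂ,
        (∑ p : Fin d × Fin d, ‖ψ p‖ ^ 2 = 1) →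
        Matrix.rank (Matrix.of fun i j : Fin d => ψ (i, j)) ≤ 2 →
        0 ≤ 1 + β * ‖∑ i : Fin d, ψ (i, i)‖ ^ 2) ∧
    (∃ φ : Fin d × Fin d → ℂ,
        (∑ p : Fin d × Fin d, ‖φ p‖ ^ 2) + β * ‖∑ i : Fin d, φ (i, i)‖ ^ 2 < 0) := by
  have hd_pos : (0 : ℝ) < d := by positivity
  have hβd : β * d < -1 := (lt_div_iff₀ hd_pos).mp hβ₂
  have hβ_neg : β < 0 := by nlinarith
  refine ⟨fun ψ hψ hrank => ?_, ⟨fun p => (1 : Matrix (Fin d) (Fin d) ℂ) p.1 p.2, ?_⟩⟩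
  · have htrace : ‖∑ i, ψ (i, i)‖ ^ 2 ≤ 2 :=
      calc ‖∑ i, ψ (i, i)‖ ^ 2
          ≤ _ := (Matrix.of fun i j : Fin d => ψ (i, j)).norm_trace_sq_le_rank_mul
        _ ≤ 2 * 1 := by
          rw [← hψ, Fintype.sum_prod_type]
          exact mul_le_mul_of_nonneg_right (by exact_mod_cast hrank) (by positivity)
        _ = 2 := mul_one 2
    linarith [mul_le_mul_of_nonpos_left htrace hβ_neg.le]
  · have hnorm : ∑ p : Fin d × Fin d, ‖(1 : Matrix (Fin d) (Fin d) ℂ) p.1 p.2‖ ^ 2 = d := by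
      rw [Fintype.sum_prod_type]
      simp [Matrix.one_apply, apply_ite]
    have htrace : ∑ i : Fin d, (1 : Matrix (Fin d) (Fin d) ℂ) i i = d := by simp
    rw [hnorm, htrace, Complex.norm_natCast]
    nlinarith
end

section
/- Let d ≥ 1, β ∈ ℝ, and let W : Matrix (Fin d × Fin d) (Fin d × Fin d) ℂ be W = 1 + β•G where G (i,j) (k,l) = 1 if i = j and k = l and 0 otherwise. For any X : Matrix (Fin d × Fin d) (Fin d × Fin d) ℂ, the quadratic form Σ over a₁,b₁,a₂,b₂,a₁',b₁',a₂',b₂' : Fin d of conj(X (a₁,a₂) (b₁,b₂)) · W (a₁,b₁) (a₁',b₁') · W (a₂,b₂) (a₂',b₂') · X (a₁',a₂') (b₁',b₂') equals (as a complex number) the real number ‖X‖_F² + β · (‖Tr₁(X)‖_F² + ‖Tr₂(X)‖_F²) + β² · ‖Tr(X)‖², where Tr(X) = Σ_{i,j} X (i,j) (i,j). -/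
/-!
Write `ψ(a₁, b₁, a₂, b₂) = X (a₁, a₂) (b₁, b₂)`; the quadratic form is `⟨ψ, (W ⊗ W) ψ⟩`.
Expanding `W ⊗ W = 1 + β (G ⊗ 1 + 1 ⊗ G) + β² (G ⊗ G)` splits it into four terms. Since
`G = |Φ⟩⟨Φ|` with `Φ = ∑ᵢ |ii⟩`, applying `G` to a pair `(aₖ, bₖ)` of indices of `ψ` contracts
that pair, i.e. takes a partial trace of `X`; hence the four terms are `‖X‖²`, `‖Tr₁ X‖²`,
`‖Tr₂ X‖²` and `|Tr X|²`.
-/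

open scoped ComplexConjugate Kronecker
open Matrix

section ExchangeVec

variable {R α β γ δ : Type*} [Fintype α] [Fintype β] [Fintype γ] [Fintype δ]

def exchangeVec (X : Matrix (α × γ) (β × δ) R) : (α × β) × (γ × δ) → R :=
  fun p => X (p.1.1, p.2.1) (p.1.2, p.2.2)

variable [CommSemiring R] [StarRing R]

theorem sum_conj_mul_mul_mul_eq_dotProduct_kronecker
    (A : Matrix (α × β) (α × β) R) (B : Matrix (γ × δ) (γ × δ) R)
    (X : Matrix (α × γ) (β × δ) R) :
    ∑ a₁, ∑ b₁, ∑ a₂, ∑ b₂, ∑ a₁', ∑ b₁', ∑ a₂', ∑ b₂',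
        conj (X (a₁, a₂) (b₁, b₂)) * A (a₁, b₁) (a₁', b₁') * B (a₂, b₂) (a₂', b₂') *
          X (a₁', a₂') (b₁', b₂')
      = star (exchangeVec X) ⬝ᵥ (A ⊗ₖ B) *ᵥ exchangeVec X := by
  simp [dotProduct, mulVec, Fintype.sum_prod_type, Finset.mul_sum, exchangeVec, mul_assoc,
    starRingEnd_apply]

theorem star_exchangeVec_dotProduct_exchangeVec (X : Matrix (α × γ) (β × δ) R) :
    star (exchangeVec X) ⬝ᵥ exchangeVec X = ∑ p, ∑ q, star (X p q) * X p q := by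
  simp only [dotProduct, exchangeVec, Fintype.sum_prod_type, Pi.star_apply]
  exact Finset.sum_congr rfl fun _ _ => Finset.sum_comm

end ExchangeVec

theorem kronecker_one_add_smul_self {S R n : Type*} [CommSemiring S] [CommSemiring R]
    [Algebra S R] [DecidableEq n] (c : S) (G : Matrix n n R) :
    (1 + c • G) ⊗ₖ (1 + c • G) = 1 + c • (G ⊗ₖ 1 + 1 ⊗ₖ G) + c ^ 2 • (G ⊗ₖ G) := by
  simp only [add_kronecker, kronecker_add, smul_kronecker, kronecker_smul, one_kronecker_one]
  module

def partialTraceLeft {ι κ κ' R : Type*} [Fintype ι] [AddCommMonoid R]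
    (X : Matrix (ι × κ) (ι × κ') R) : Matrix κ κ' R :=
  of fun j l => ∑ i, X (i, j) (i, l)

def partialTraceRight {ι ι' κ R : Type*} [Fintype κ] [AddCommMonoid R]
    (X : Matrix (ι × κ) (ι' × κ) R) : Matrix ι ι' R :=
  of fun i k => ∑ j, X (i, j) (k, j)

/-- `|Φ⟩⟨Φ|` for the unnormalized maximally entangled vector `Φ = ∑ᵢ |ii⟩`. -/
def maxEntangledOp (ι R : Type*) [DecidableEq ι] [Zero R] [One R] :
    Matrix (ι × ι) (ι × ι) R :=
  of fun p q => if p.1 = p.2 ∧ q.1 = q.2 then 1 else 0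

section MaxEntangledOp

variable {ι R : Type*} [Fintype ι] [DecidableEq ι]

section Semiring

variable [Semiring R]

theorem maxEntangledOp_kronecker_one_mulVec_exchangeVec (X : Matrix (ι × ι) (ι × ι) R) :
    (maxEntangledOp ι R ⊗ₖ 1) *ᵥ exchangeVec X = fun p : (ι × ι) × ι × ι =>
      if p.1.1 = p.1.2 then partialTraceLeft X p.2.1 p.2.2 else 0 := by
  ext ⟨⟨a₁, b₁⟩, a₂, b₂⟩
  simp [mulVec, dotProduct, maxEntangledOp, exchangeVec, partialTraceLeft, one_apply,
    Fintype.sum_prod_type, ite_and, Finset.sum_ite_irrel]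

theorem one_kronecker_maxEntangledOp_mulVec_exchangeVec (X : Matrix (ι × ι) (ι × ι) R) :
    (1 ⊗ₖ maxEntangledOp ι R) *ᵥ exchangeVec X = fun p : (ι × ι) × ι × ι =>
      if p.2.1 = p.2.2 then partialTraceRight X p.1.1 p.1.2 else 0 := by
  ext ⟨⟨a₁, b₁⟩, a₂, b₂⟩
  simp [mulVec, dotProduct, maxEntangledOp, exchangeVec, partialTraceRight, one_apply,
    Fintype.sum_prod_type, ite_and, Finset.sum_ite_irrel]

theorem maxEntangledOp_kronecker_self_mulVec_exchangeVec (X : Matrix (ι × ι) (ι × ι) R) :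
    (maxEntangledOp ι R ⊗ₖ maxEntangledOp ι R) *ᵥ exchangeVec X = fun p : (ι × ι) × ι × ι =>
      if p.2.1 = p.2.2 ∧ p.1.1 = p.1.2 then trace X else 0 := by
  ext ⟨⟨a₁, b₁⟩, a₂, b₂⟩
  simp [mulVec, dotProduct, maxEntangledOp, exchangeVec, trace, Fintype.sum_prod_type, ite_and,
    Finset.sum_ite_irrel]

end Semiring

variable [CommSemiring R] [StarRing R]

theorem star_exchangeVec_dotProduct_maxEntangledOp_kronecker_one_mulVec
    (X : Matrix (ι × ι) (ι × ι) R) :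
    star (exchangeVec X) ⬝ᵥ (maxEntangledOp ι R ⊗ₖ 1) *ᵥ exchangeVec X
      = ∑ j, ∑ l, star (partialTraceLeft X j l) * partialTraceLeft X j l := by
  rw [maxEntangledOp_kronecker_one_mulVec_exchangeVec]
  simp only [dotProduct, Pi.star_apply, exchangeVec, partialTraceLeft, of_apply, mul_ite, mul_zero,
    Fintype.sum_prod_type, Finset.sum_ite_irrel, Finset.sum_const_zero, Finset.sum_ite_eq,
    Finset.mem_univ, ↓reduceIte, star_sum, Finset.sum_mul]
  rw [Finset.sum_comm]
  exact Finset.sum_congr rfl fun _ _ => Finset.sum_comm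

theorem star_exchangeVec_dotProduct_one_kronecker_maxEntangledOp_mulVec
    (X : Matrix (ι × ι) (ι × ι) R) :
    star (exchangeVec X) ⬝ᵥ (1 ⊗ₖ maxEntangledOp ι R) *ᵥ exchangeVec X
      = ∑ i, ∑ k, star (partialTraceRight X i k) * partialTraceRight X i k := by
  rw [one_kronecker_maxEntangledOp_mulVec_exchangeVec]
  simp [dotProduct, exchangeVec, Fintype.sum_prod_type, partialTraceRight, star_sum,
    Finset.sum_mul]

theorem star_exchangeVec_dotProduct_maxEntangledOp_kronecker_self_mulVec
    (X : Matrix (ι × ι) (ι × ι) R) :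
    star (exchangeVec X) ⬝ᵥ (maxEntangledOp ι R ⊗ₖ maxEntangledOp ι R) *ᵥ exchangeVec X
      = star (trace X) * trace X := by
  rw [maxEntangledOp_kronecker_self_mulVec_exchangeVec]
  simp [dotProduct, exchangeVec, Fintype.sum_prod_type, trace, star_sum, Finset.sum_mul, ite_and,
    Finset.sum_ite_irrel]

end MaxEntangledOp

theorem two_copy_werner_quadratic_form_general
    (d : ℕ) (β : ℝ)
    (G W : Matrix (Fin d × Fin d) (Fin d × Fin d) ℂ)
    (hG : ∀ i j k l : Fin d, G (i, j) (k, l) = if i = j ∧ k = l then 1 else 0)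
    (hW : W = 1 + β • G)
    (X : Matrix (Fin d × Fin d) (Fin d × Fin d) ℂ) :
    (∑ a₁ : Fin d, ∑ b₁ : Fin d, ∑ a₂ : Fin d, ∑ b₂ : Fin d,
      ∑ a₁' : Fin d, ∑ b₁' : Fin d, ∑ a₂' : Fin d, ∑ b₂' : Fin d,
        conj (X (a₁, a₂) (b₁, b₂)) * W (a₁, b₁) (a₁', b₁') * W (a₂, b₂) (a₂', b₂') *
          X (a₁', a₂') (b₁', b₂'))
    = (((∑ p : Fin d × Fin d, ∑ q : Fin d × Fin d, ‖X p q‖ ^ 2)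
        + β * ((∑ j : Fin d, ∑ l : Fin d, ‖∑ i : Fin d, X (i, j) (i, l)‖ ^ 2)
              + (∑ i : Fin d, ∑ k : Fin d, ‖∑ j : Fin d, X (i, j) (k, j)‖ ^ 2))
        + β ^ 2 * ‖∑ p : Fin d × Fin d, X p p‖ ^ 2 : ℝ) : ℂ) := by
  have hG_eq : G = maxEntangledOp (Fin d) ℂ := by
    ext ⟨i, j⟩ ⟨k, l⟩
    exact hG i j k l
  have star_mul_self (z : ℂ) : star z * z = ((‖z‖ ^ 2 : ℝ) : ℂ) := by
    rw [Complex.star_def, Complex.conj_mul', Complex.ofReal_pow]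
  rw [sum_conj_mul_mul_mul_eq_dotProduct_kronecker, hW, hG_eq, kronecker_one_add_smul_self]
  simp only [add_mulVec, smul_mulVec, one_mulVec, dotProduct_add, dotProduct_smul,
    star_exchangeVec_dotProduct_exchangeVec,
    star_exchangeVec_dotProduct_maxEntangledOp_kronecker_one_mulVec,
    star_exchangeVec_dotProduct_one_kronecker_maxEntangledOp_mulVec,
    star_exchangeVec_dotProduct_maxEntangledOp_kronecker_self_mulVec, star_mul_self]
  simp only [partialTraceLeft, partialTraceRight, trace, of_apply, diag_apply, Complex.real_smul]
  push_cast
  ring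

/-- For `W = 1 + β•G` with `G (i,j) (k,l) = δ_{ij} δ_{kl}`, the quadratic
form of `W ⊗ W` (with the exchange pairing of subsystems) on the vector corresponding to a
matrix `X` equals `‖X‖_F² + β(‖Tr₁X‖_F² + ‖Tr₂X‖_F²) + β²‖Tr X‖²`. -/
theorem two_copy_werner_quadratic_form
    (d : ℕ) (hd : 1 ≤ d) (β : ℝ)
    (G W : Matrix (Fin d × Fin d) (Fin d × Fin d) ℂ)
    (hG : ∀ i j k l : Fin d, G (i, j) (k, l) = if i = j ∧ k = l then 1 else 0)
    (hW : W = 1 + β • G)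
    (X : Matrix (Fin d × Fin d) (Fin d × Fin d) ℂ) :
    (∑ a₁ : Fin d, ∑ b₁ : Fin d, ∑ a₂ : Fin d, ∑ b₂ : Fin d,
      ∑ a₁' : Fin d, ∑ b₁' : Fin d, ∑ a₂' : Fin d, ∑ b₂' : Fin d,
        conj (X (a₁, a₂) (b₁, b₂)) * W (a₁, b₁) (a₁', b₁') * W (a₂, b₂) (a₂', b₂') *
          X (a₁', a₂') (b₁', b₂'))
    = (((∑ p : Fin d × Fin d, ∑ q : Fin d × Fin d, ‖X p q‖ ^ 2)
        + β * ((∑ j : Fin d, ∑ l : Fin d, ‖∑ i : Fin d, X (i, j) (i, l)‖ ^ 2)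
              + (∑ i : Fin d, ∑ k : Fin d, ‖∑ j : Fin d, X (i, j) (k, j)‖ ^ 2))
        + β ^ 2 * ‖∑ p : Fin d × Fin d, X p p‖ ^ 2 : ℝ) : ℂ) :=
  two_copy_werner_quadratic_form_general d β G W hG hW X
end

section
/- Let d ≥ 1, N ≥ 1, β ∈ ℝ, and let W : Matrix (Fin d × Fin d) (Fin d × Fin d) ℂ be W = 1 + β•G where G (i,j) (k,l) = 1 if i = j and k = l and 0 otherwise. For any X : Matrix (Fin N → Fin d) (Fin N → Fin d) ℂ define v : (Fin N → Fin d × Fin d) → ℂ by v f = X (fun n => (f n).1) (fun n => (f n).2). Then Σ over f, g : Fin N → Fin d × Fin d of conj(v f) · (∏_{n : Fin N} W (f n) (g n)) · (v g) equals (as a complex number) the real number Σ over S : Finset (Fin N) of β^{S.card} · ‖Tr_S(X)‖_F². -/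
open scoped ComplexConjugate

/-- Partial trace of `X : Matrix (Fin N → Fin d) (Fin N → Fin d) ℂ` over the subsystems
in the finset `S`: the resulting matrix is indexed by functions `↥(Sᶜ) → Fin d`, and its
`(a, b)` entry sums `X` over a common assignment `e : ↥S → Fin d` on the traced subsystems. -/
noncomputable def ptrace {N d : ℕ} (S : Finset (Fin N))
    (X : Matrix (Fin N → Fin d) (Fin N → Fin d) ℂ) :
    Matrix ({n // n ∈ Sᶜ} → Fin d) ({n // n ∈ Sᶜ} → Fin d) ℂ :=
  Matrix.of fun a b => ∑ e : {n // n ∈ S} → Fin d,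
    X (fun n => if h : n ∈ S then e ⟨n, h⟩ else a ⟨n, Finset.mem_compl.mpr h⟩)
      (fun n => if h : n ∈ S then e ⟨n, h⟩ else b ⟨n, Finset.mem_compl.mpr h⟩)

namespace WernerAux

variable {N d : ℕ}

/-- Merge an assignment on `S` with one on `Sᶜ`. -/
def mg (S : Finset (Fin N)) (e : {n // n ∈ S} → Fin d) (a : {n // n ∈ Sᶜ} → Fin d) :
    Fin N → Fin d :=
  fun n => if h : n ∈ S then e ⟨n, h⟩ else a ⟨n, Finset.mem_compl.mpr h⟩

lemma ptrace_apply (S : Finset (Fin N)) (X : Matrix (Fin N → Fin d) (Fin N → Fin d) ℂ)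
    (a b : {n // n ∈ Sᶜ} → Fin d) :
    ptrace S X a b = ∑ e : {n // n ∈ S} → Fin d, X (mg S e a) (mg S e b) := rfl

/-- The reparametrization map. -/
def Ψ (S : Finset (Fin N)) :
    (({n // n ∈ Sᶜ} → Fin d) × ({n // n ∈ Sᶜ} → Fin d) ×
      ({n // n ∈ S} → Fin d) × ({n // n ∈ S} → Fin d)) →
    ((Fin N → Fin d × Fin d) × (Fin N → Fin d × Fin d)) :=
  fun z => (fun n => (mg S z.2.2.1 z.1 n, mg S z.2.2.1 z.2.1 n),
            fun n => (mg S z.2.2.2 z.1 n, mg S z.2.2.2 z.2.1 n))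

lemma Ψ_injective (S : Finset (Fin N)) : Function.Injective (Ψ (d := d) S) := by
  rintro ⟨a, b, e, e'⟩ ⟨a', b', e₁, e₁'⟩ h
  have h1 := congrArg Prod.fst h
  have h2 := congrArg Prod.snd h
  simp only [Ψ] at h1 h2
  have ha : a = a' := by
    funext n
    have := congrFun h1 n.1
    have hn : (n : Fin N) ∉ S := Finset.mem_compl.mp n.2
    simpa [mg, dif_neg hn] using congrArg Prod.fst this
  have hb : b = b' := by
    funext n
    have := congrFun h1 n.1
    have hn : (n : Fin N) ∉ S := Finset.mem_compl.mp n.2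
    simpa [mg, dif_neg hn] using congrArg Prod.snd this
  have he : e = e₁ := by
    funext n
    have := congrFun h1 n.1
    simpa [mg, dif_pos n.2] using congrArg Prod.fst this
  have he' : e' = e₁' := by
    funext n
    have := congrFun h2 n.1
    simpa [mg, dif_pos n.2] using congrArg Prod.fst this
  simp [ha, hb, he, he']

lemma sum_sum_sum_comm {α β γ M : Type*} [Fintype α] [Fintype β] [Fintype γ]
    [AddCommMonoid M] (T : α → β → γ → M) :
    ∑ a : α, ∑ b : β, ∑ c : γ, T a b c = ∑ c : γ, ∑ a : α, ∑ b : β, T a b c :=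
  calc ∑ a : α, ∑ b : β, ∑ c : γ, T a b c
      = ∑ a : α, ∑ c : γ, ∑ b : β, T a b c :=
        Finset.sum_congr rfl fun _ _ => Finset.sum_comm
    _ = ∑ c : γ, ∑ a : α, ∑ b : β, T a b c := Finset.sum_comm

/-- key lemma: for a fixed `S`, the constrained double sum equals the Frobenius data. -/
lemma key (S : Finset (Fin N)) (X : Matrix (Fin N → Fin d) (Fin N → Fin d) ℂ) :
    (∑ f : Fin N → Fin d × Fin d, ∑ g : Fin N → Fin d × Fin d,
      (conj (X (fun n => (f n).1) (fun n => (f n).2)) * X (fun n => (g n).1) (fun n => (g n).2))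
        * ((∏ n ∈ S, if (f n).1 = (f n).2 ∧ (g n).1 = (g n).2 then (1 : ℂ) else 0)
            * ∏ n ∈ Sᶜ, if f n = g n then (1 : ℂ) else 0))
    = ∑ a : {n // n ∈ Sᶜ} → Fin d, ∑ b : {n // n ∈ Sᶜ} → Fin d,
        conj (ptrace S X a b) * ptrace S X a b := by
  classical
  set F : ((Fin N → Fin d × Fin d) × (Fin N → Fin d × Fin d)) → ℂ := fun p =>
    (conj (X (fun n => (p.1 n).1) (fun n => (p.1 n).2))
        * X (fun n => (p.2 n).1) (fun n => (p.2 n).2))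
      * ((∏ n ∈ S, if (p.1 n).1 = (p.1 n).2 ∧ (p.2 n).1 = (p.2 n).2 then (1 : ℂ) else 0)
          * ∏ n ∈ Sᶜ, if p.1 n = p.2 n then (1 : ℂ) else 0) with hF
  have step1 : (∑ f : Fin N → Fin d × Fin d, ∑ g : Fin N → Fin d × Fin d,
      (conj (X (fun n => (f n).1) (fun n => (f n).2)) * X (fun n => (g n).1) (fun n => (g n).2))
        * ((∏ n ∈ S, if (f n).1 = (f n).2 ∧ (g n).1 = (g n).2 then (1 : ℂ) else 0)
            * ∏ n ∈ Sᶜ, if f n = g n then (1 : ℂ) else 0))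
      = ∑ p, F p := (Fintype.sum_prod_type F).symm
  rw [step1]
  have step2 : ∑ p, F p
      = ∑ z : ({n // n ∈ Sᶜ} → Fin d) × ({n // n ∈ Sᶜ} → Fin d) ×
          ({n // n ∈ S} → Fin d) × ({n // n ∈ S} → Fin d), F (Ψ S z) := by
    refine (Finset.sum_of_injOn (Ψ S) ((Ψ_injective S).injOn)
      (fun z _ => by simp) ?_ (fun z _ => rfl)).symm
    · intro p _ hp
      by_contra hne
      -- both products nonzero ⇒ constraints hold ⇒ p in range of Ψ
      have hmul : F p ≠ 0 := hne
      simp only [hF] at hmul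
      have hS : ∀ n ∈ S, (p.1 n).1 = (p.1 n).2 ∧ (p.2 n).1 = (p.2 n).2 := by
        by_contra hc
        rw [Finset.prod_boole, if_neg hc] at hmul
        simp at hmul
      have hSc : ∀ n ∈ Sᶜ, p.1 n = p.2 n := by
        by_contra hc
        rw [Finset.prod_boole (p := fun n => p.1 n = p.2 n), if_neg hc] at hmul
        simp at hmul
      apply hp
      refine ⟨⟨fun n => (p.1 n.1).1, fun n => (p.1 n.1).2,
        fun n => (p.1 n.1).1, fun n => (p.2 n.1).1⟩, by simp, ?_⟩
      apply Prod.ext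
      · funext n
        by_cases h : n ∈ S
        · show ((mg S _ _ n : Fin d), (mg S _ _ n : Fin d)) = p.1 n
          simp only [mg, dif_pos h]
          exact Prod.ext rfl (hS n h).1
        · show ((mg S _ _ n : Fin d), (mg S _ _ n : Fin d)) = p.1 n
          simp only [mg, dif_neg h]
      · funext n
        by_cases h : n ∈ S
        · show ((mg S _ _ n : Fin d), (mg S _ _ n : Fin d)) = p.2 n
          simp only [mg, dif_pos h]
          exact Prod.ext rfl (hS n h).2
        · show ((mg S _ _ n : Fin d), (mg S _ _ n : Fin d)) = p.2 n
          simp only [mg, dif_neg h]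
          rw [← hSc n (Finset.mem_compl.mpr h)]
  rw [step2]
  have hΨval : ∀ a b e e', F (Ψ S (a, b, e, e'))
      = conj (X (mg S e a) (mg S e b)) * X (mg S e' a) (mg S e' b) := by
    intro a b e e'
    simp only [hF]
    have h1 : (∏ n ∈ S, if ((Ψ S (a,b,e,e')).1 n).1 = ((Ψ S (a,b,e,e')).1 n).2 ∧
        ((Ψ S (a,b,e,e')).2 n).1 = ((Ψ S (a,b,e,e')).2 n).2 then (1 : ℂ) else 0) = 1 := by
      apply Finset.prod_eq_one
      intro n hn
      simp [Ψ, mg, dif_pos hn]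
    have h2 : (∏ n ∈ Sᶜ, if (Ψ S (a,b,e,e')).1 n = (Ψ S (a,b,e,e')).2 n
        then (1 : ℂ) else 0) = 1 := by
      apply Finset.prod_eq_one
      intro n hn
      have hn' : n ∉ S := Finset.mem_compl.mp hn
      simp [Ψ, mg, dif_neg hn']
    rw [h1, h2, mul_one, mul_one]
    rfl
  calc ∑ z : ({n // n ∈ Sᶜ} → Fin d) × ({n // n ∈ Sᶜ} → Fin d) ×
          ({n // n ∈ S} → Fin d) × ({n // n ∈ S} → Fin d), F (Ψ S z)
      = ∑ a : {n // n ∈ Sᶜ} → Fin d, ∑ b : {n // n ∈ Sᶜ} → Fin d,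
          ∑ e : {n // n ∈ S} → Fin d, ∑ e' : {n // n ∈ S} → Fin d,
            conj (X (mg S e a) (mg S e b)) * X (mg S e' a) (mg S e' b) := by
        rw [Fintype.sum_prod_type]
        refine Finset.sum_congr rfl fun a _ => ?_
        rw [Fintype.sum_prod_type]
        refine Finset.sum_congr rfl fun b _ => ?_
        rw [Fintype.sum_prod_type]
        exact Finset.sum_congr rfl fun e _ => Finset.sum_congr rfl fun e' _ => hΨval a b e e'
    _ = ∑ a : {n // n ∈ Sᶜ} → Fin d, ∑ b : {n // n ∈ Sᶜ} → Fin d,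
          conj (ptrace S X a b) * ptrace S X a b := by
        refine Finset.sum_congr rfl fun a _ => Finset.sum_congr rfl fun b _ => ?_
        rw [ptrace_apply, map_sum, Finset.sum_mul_sum]

end WernerAux

/-- The quadratic form of `W^{⊗N}` (with `W = 1 + β•G`, and subsystems
regrouped by `M_N`) on the vector `v` corresponding to the matrix `X` equals
`∑_{S ⊆ {1,…,N}} β^{|S|} ‖Tr_S X‖_F²`. -/
theorem n_copy_werner_quadratic_form
    (d N : ℕ) (hd : 1 ≤ d) (hN : 1 ≤ N) (β : ℝ)
    (G W : Matrix (Fin d × Fin d) (Fin d × Fin d) ℂ)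
    (hG : ∀ i j k l : Fin d, G (i, j) (k, l) = if i = j ∧ k = l then 1 else 0)
    (hW : W = 1 + β • G)
    (X : Matrix (Fin N → Fin d) (Fin N → Fin d) ℂ)
    (v : (Fin N → Fin d × Fin d) → ℂ)
    (hv : ∀ f, v f = X (fun n => (f n).1) (fun n => (f n).2)) :
    (∑ f : Fin N → Fin d × Fin d, ∑ g : Fin N → Fin d × Fin d,
        conj (v f) * (∏ n : Fin N, W (f n) (g n)) * v g)
    = ((∑ S : Finset (Fin N), β ^ S.card *
          ∑ a : {n // n ∈ Sᶜ} → Fin d, ∑ b : {n // n ∈ Sᶜ} → Fin d,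
            ‖ptrace S X a b‖ ^ 2 : ℝ) : ℂ) := by
  classical
  have hWentry : ∀ p q : Fin d × Fin d,
      W p q = (β : ℂ) * (if p.1 = p.2 ∧ q.1 = q.2 then 1 else 0)
        + (if p = q then 1 else 0) := by
    intro p q
    have : G p q = if p.1 = p.2 ∧ q.1 = q.2 then 1 else 0 := hG p.1 p.2 q.1 q.2
    rw [hW]
    simp [Matrix.add_apply, Matrix.smul_apply, Matrix.one_apply, this, Complex.real_smul,
      add_comm]
  -- expand the product over n
  have hprod : ∀ f g : Fin N → Fin d × Fin d,
      (∏ n : Fin N, W (f n) (g n))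
        = ∑ S : Finset (Fin N), (β : ℂ) ^ S.card *
            ((∏ n ∈ S, if (f n).1 = (f n).2 ∧ (g n).1 = (g n).2 then (1 : ℂ) else 0)
              * ∏ n ∈ Sᶜ, if f n = g n then (1 : ℂ) else 0) := by
    intro f g
    calc (∏ n : Fin N, W (f n) (g n))
        = ∏ n : Fin N, ((β : ℂ) * (if (f n).1 = (f n).2 ∧ (g n).1 = (g n).2 then 1 else 0)
            + (if f n = g n then 1 else 0)) := by
          refine Finset.prod_congr rfl fun n _ => ?_
          rw [hWentry]
      _ = ∑ S ∈ Finset.univ.powerset,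
            (∏ n ∈ S, (β : ℂ) * (if (f n).1 = (f n).2 ∧ (g n).1 = (g n).2 then 1 else 0))
              * ∏ n ∈ Finset.univ \ S, (if f n = g n then (1 : ℂ) else 0) :=
          Finset.prod_add _ _ _
      _ = _ := by
          rw [Finset.powerset_univ]
          refine Finset.sum_congr rfl fun S _ => ?_
          rw [Finset.prod_mul_distrib, Finset.prod_const, ← Finset.compl_eq_univ_sdiff,
            mul_assoc]
  calc (∑ f : Fin N → Fin d × Fin d, ∑ g : Fin N → Fin d × Fin d,
        conj (v f) * (∏ n : Fin N, W (f n) (g n)) * v g)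
      = ∑ S : Finset (Fin N), (β : ℂ) ^ S.card *
          ∑ f : Fin N → Fin d × Fin d, ∑ g : Fin N → Fin d × Fin d,
            (conj (X (fun n => (f n).1) (fun n => (f n).2))
                * X (fun n => (g n).1) (fun n => (g n).2))
              * ((∏ n ∈ S, if (f n).1 = (f n).2 ∧ (g n).1 = (g n).2 then (1 : ℂ) else 0)
                  * ∏ n ∈ Sᶜ, if f n = g n then (1 : ℂ) else 0) := by
        simp only [hv, hprod, Finset.mul_sum, Finset.sum_mul]
        rw [WernerAux.sum_sum_sum_comm]
        refine Finset.sum_congr rfl fun S _ => ?_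
        refine Finset.sum_congr rfl fun f _ => ?_
        refine Finset.sum_congr rfl fun g _ => ?_
        ring
    _ = ∑ S : Finset (Fin N), (β : ℂ) ^ S.card *
          ∑ a : {n // n ∈ Sᶜ} → Fin d, ∑ b : {n // n ∈ Sᶜ} → Fin d,
            conj (ptrace S X a b) * ptrace S X a b := by
        refine Finset.sum_congr rfl fun S _ => ?_
        rw [WernerAux.key]
    _ = _ := by
        rw [Complex.ofReal_sum]
        refine Finset.sum_congr rfl fun S _ => ?_
        rw [Complex.ofReal_mul, Complex.ofReal_pow, Complex.ofReal_sum]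
        refine congrArg (fun t => (β : ℂ) ^ S.card * t) ?_
        refine Finset.sum_congr rfl fun a _ => ?_
        rw [Complex.ofReal_sum]
        refine Finset.sum_congr rfl fun b _ => ?_
        rw [RCLike.conj_mul, Complex.ofReal_pow]
        norm_cast
end

section
/- Let d ≥ 1, N ≥ 1, and let β₀ ∈ ℝ with -1 ≤ β₀ ≤ 0 and 1 + (1+β₀)^N - (1-β₀)^N = 0. Then for every β ∈ ℝ with β ≥ β₀ and every X : Matrix (Fin N → Fin d) (Fin N → Fin d) ℂ with Matrix.rank X ≤ 2, one has 0 ≤ Σ over S : Finset (Fin N) of β^{S.card} · ‖Tr_S(X)‖_F². (In the paper's terms: if β₀ is the zero of 1 + (1+β)^N - (1-β)^N in [-1,0], then the Werner state ρ_w is N-undistillable whenever β ≥ β₀.) -/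
/-!
Write `c S = ‖Tr_S X‖_F²`. If `X = ∑_{i < r} u_i c_iᵀ` with unit vectors `u_i` (an orthonormal
basis of the column space, `r = rank X`), then Cauchy–Schwarz gives `c S ≤ r ‖X‖_F² = r c ∅`, so
`c S ≤ 2 c ∅` for rank at most two. For `β ≥ 0` every term is nonnegative. For `β < 0` the
terms with `|S|` even are nonnegative and those with `|S|` odd are at least `-2 |β|^|S| c ∅`;
by the binomial theorem these bounds add up to `c ∅ (1 + (1 + β)^N - (1 - β)^N)`, which is
nonnegative because this polynomial is increasing on `[-1, 0]` and vanishes at `β₀`.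
-/

open Finset

theorem norm_sum_mul_sq_le_s9 {ι 𝕜 : Type*} [Fintype ι] [RCLike 𝕜] (x y : ι → 𝕜) :
    ‖∑ e, x e * y e‖ ^ 2 ≤ (∑ e, ‖x e‖ ^ 2) * ∑ e, ‖y e‖ ^ 2 :=
  calc ‖∑ e, x e * y e‖ ^ 2 ≤ (∑ e, ‖x e‖ * ‖y e‖) ^ 2 := by
        gcongr
        exact (norm_sum_le _ _).trans_eq (sum_congr rfl fun e _ => norm_mul _ _)
    _ ≤ _ := sum_mul_sq_le_sq_mul_sq _ _ _

namespace Matrix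

variable {m n 𝕜 : Type*} [Fintype m] [Fintype n] [RCLike 𝕜]

def frobeniusNormSq (M : Matrix m n 𝕜) : ℝ := ∑ i, ∑ j, ‖M i j‖ ^ 2

theorem frobeniusNormSq_nonneg (M : Matrix m n 𝕜) : 0 ≤ M.frobeniusNormSq := by
  unfold frobeniusNormSq; positivity

theorem frobeniusNormSq_submatrix {m₀ n₀ : Type*} [Fintype m₀] [Fintype n₀]
    (M : Matrix m n 𝕜) (em : m₀ ≃ m) (en : n₀ ≃ n) :
    (M.submatrix em en).frobeniusNormSq = M.frobeniusNormSq := by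
  simp only [frobeniusNormSq, submatrix_apply]
  rw [em.sum_comp (fun i => ∑ j, ‖M i (en j)‖ ^ 2)]
  exact sum_congr rfl fun i _ => en.sum_comp (fun j => ‖M i j‖ ^ 2)

theorem frobeniusNormSq_sum_le {r : ℕ} (M : Fin r → Matrix m n 𝕜) :
    (∑ i, M i).frobeniusNormSq ≤ r * ∑ i, (M i).frobeniusNormSq := by
  have hentry : ∀ a b, ‖(∑ i, M i) a b‖ ^ 2 ≤ r * ∑ i, ‖M i a b‖ ^ 2 := fun a b => by
    rw [sum_apply]
    calc ‖∑ i, M i a b‖ ^ 2 ≤ (∑ i, ‖M i a b‖) ^ 2 := by gcongr; exact norm_sum_le _ _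
      _ ≤ _ := by simpa using sq_sum_le_card_mul_sum_sq (s := univ) (f := fun i => ‖M i a b‖)
  calc (∑ i, M i).frobeniusNormSq ≤ ∑ a, ∑ b, r * ∑ i, ‖M i a b‖ ^ 2 :=
        sum_le_sum fun a _ => sum_le_sum fun b _ => hentry a b
    _ = r * ∑ i, (M i).frobeniusNormSq := by
        simp only [frobeniusNormSq, ← mul_sum]
        congr 1
        exact (sum_congr rfl fun a _ => sum_comm).trans sum_comm

theorem exists_sum_vecMulVec_eq_of_rank (Y : Matrix m n 𝕜) :
    ∃ (u : Fin Y.rank → m → 𝕜) (c : Fin Y.rank → n → 𝕜),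
      Y = ∑ i, vecMulVec (u i) (c i) ∧ (∀ i, ∑ p, ‖u i p‖ ^ 2 = 1) ∧
        ∑ i, ∑ q, ‖c i q‖ ^ 2 = Y.frobeniusNormSq := by
  set V : Submodule 𝕜 (EuclideanSpace 𝕜 m) :=
    (LinearMap.range Y.mulVecLin).map (WithLp.linearEquiv 2 𝕜 (m → 𝕜)).symm.toLinearMap
  have hcol : ∀ q, WithLp.toLp 2 (Y.col q) ∈ V := fun q =>
    Submodule.mem_map_of_mem (by rw [range_mulVecLin]; exact Submodule.subset_span ⟨q, rfl⟩)
  let b : OrthonormalBasis (Fin Y.rank) 𝕜 V :=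
    (stdOrthonormalBasis 𝕜 V).reindex (finCongr (LinearEquiv.finrank_map_eq _ _))
  refine ⟨fun i p => (b i : EuclideanSpace 𝕜 m) p, fun i q => inner 𝕜 (b i) ⟨_, hcol q⟩,
    ?_, fun i => ?_, ?_⟩
  · ext p q
    have := congrArg (fun v : V => (v : EuclideanSpace 𝕜 m) p) (b.sum_repr' ⟨_, hcol q⟩)
    simpa [sum_apply, vecMulVec_apply, mul_comm] using this.symm
  · rw [← EuclideanSpace.norm_sq_eq, ← Submodule.coe_norm, b.orthonormal.1 i, one_pow]
  · calc ∑ i, ∑ q, ‖inner 𝕜 (b i) (⟨_, hcol q⟩ : V)‖ ^ 2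
        = ∑ q, ‖WithLp.toLp 2 (Y.col q)‖ ^ 2 := by
          rw [sum_comm]
          exact sum_congr rfl fun q _ => b.sum_sq_norm_inner_right _
      _ = Y.frobeniusNormSq := by
          simp only [EuclideanSpace.norm_sq_eq, frobeniusNormSq]
          exact sum_comm

variable {A B E : Type*} [Fintype E]

def traceRight {α : Type*} [AddCommMonoid α] (Y : Matrix (A × E) (B × E) α) : Matrix A B α :=
  of fun a b => ∑ e, Y (a, e) (b, e)

theorem traceRight_sum {α ι : Type*} [AddCommMonoid α] (s : Finset ι)
    (Y : ι → Matrix (A × E) (B × E) α) :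
    traceRight (∑ i ∈ s, Y i) = ∑ i ∈ s, traceRight (Y i) := by
  ext a b
  simp only [traceRight, of_apply, sum_apply]
  exact sum_comm

variable [Fintype A] [Fintype B]

theorem frobeniusNormSq_traceRight_vecMulVec_le (x : A × E → 𝕜) (y : B × E → 𝕜) :
    (traceRight (vecMulVec x y)).frobeniusNormSq ≤ (∑ p, ‖x p‖ ^ 2) * ∑ q, ‖y q‖ ^ 2 :=
  calc (traceRight (vecMulVec x y)).frobeniusNormSq
      ≤ ∑ a, ∑ b, (∑ e, ‖x (a, e)‖ ^ 2) * ∑ e, ‖y (b, e)‖ ^ 2 :=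
        sum_le_sum fun a _ => sum_le_sum fun b _ =>
          norm_sum_mul_sq_le_s9 (fun e => x (a, e)) (fun e => y (b, e))
    _ = (∑ p, ‖x p‖ ^ 2) * ∑ q, ‖y q‖ ^ 2 := by
        rw [Fintype.sum_prod_type, Fintype.sum_prod_type, sum_mul_sum]

theorem frobeniusNormSq_traceRight_le_rank_mul (Y : Matrix (A × E) (B × E) 𝕜) :
    (traceRight Y).frobeniusNormSq ≤ Y.rank * Y.frobeniusNormSq := by
  obtain ⟨u, c, hY, hu, hc⟩ := Y.exists_sum_vecMulVec_eq_of_rank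
  calc (traceRight Y).frobeniusNormSq
      = (∑ i, traceRight (vecMulVec (u i) (c i))).frobeniusNormSq := by
        rw [← traceRight_sum, ← hY]
    _ ≤ Y.rank * ∑ i, (traceRight (vecMulVec (u i) (c i))).frobeniusNormSq :=
        frobeniusNormSq_sum_le _
    _ ≤ Y.rank * ∑ i, (∑ p, ‖u i p‖ ^ 2) * ∑ q, ‖c i q‖ ^ 2 := by
        gcongr with i
        exact frobeniusNormSq_traceRight_vecMulVec_le _ _
    _ = Y.rank * Y.frobeniusNormSq := by simp only [hu, one_mul, hc]

theorem frobeniusNormSq_traceRight_of_unique [Unique E] (Y : Matrix (A × E) (B × E) 𝕜) :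
    (traceRight Y).frobeniusNormSq = Y.frobeniusNormSq := by
  simp only [frobeniusNormSq, traceRight, of_apply, Fintype.sum_prod_type, Fintype.sum_unique]

end Matrix

def Finset.mergeEquiv {ι α : Type*} [Fintype ι] [DecidableEq ι] (S : Finset ι) :
    (({n // n ∈ Sᶜ} → α) × ({n // n ∈ S} → α)) ≃ (ι → α) where
  toFun ae n := if h : n ∈ S then ae.2 ⟨n, h⟩ else ae.1 ⟨n, mem_compl.mpr h⟩
  invFun x := (fun n => x n, fun n => x n)
  left_inv ae := by
    ext n
    · simp [mem_compl.mp n.2]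
    · simp [n.2]
  right_inv x := by
    ext n
    by_cases h : n ∈ S <;> simp [h]

theorem ptrace_eq_traceRight {N d : ℕ} (S : Finset (Fin N))
    (X : Matrix (Fin N → Fin d) (Fin N → Fin d) ℂ) :
    ptrace S X = Matrix.traceRight (X.submatrix S.mergeEquiv S.mergeEquiv) := rfl

theorem frobeniusNormSq_ptrace_le_rank_mul {N d : ℕ} (S : Finset (Fin N))
    (X : Matrix (Fin N → Fin d) (Fin N → Fin d) ℂ) :
    (ptrace S X).frobeniusNormSq ≤ X.rank * X.frobeniusNormSq := by
  simpa [ptrace_eq_traceRight, Matrix.frobeniusNormSq_submatrix] using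
    (X.submatrix S.mergeEquiv S.mergeEquiv).frobeniusNormSq_traceRight_le_rank_mul

theorem frobeniusNormSq_ptrace_empty {N d : ℕ} (X : Matrix (Fin N → Fin d) (Fin N → Fin d) ℂ) :
    (ptrace ∅ X).frobeniusNormSq = X.frobeniusNormSq := by
  rw [ptrace_eq_traceRight, Matrix.frobeniusNormSq_traceRight_of_unique,
    Matrix.frobeniusNormSq_submatrix]

theorem sum_pow_card_eq {ι : Type*} [Fintype ι] (x : ℝ) :
    ∑ S : Finset ι, x ^ S.card = (x + 1) ^ Fintype.card ι := by
  simpa using Fintype.sum_pow_mul_eq_add_pow ι x 1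

theorem mul_pow_sub_neg_pow_le {β c F : ℝ} (hβ : β ≤ 0) (hc₀ : 0 ≤ c) (hc : c ≤ 2 * F) (k : ℕ) :
    F * (β ^ k - (-β) ^ k) ≤ β ^ k * c := by
  rcases Nat.even_or_odd k with hk | hk
  · rw [hk.neg_pow, sub_self, mul_zero]
    exact mul_nonneg (hk.pow_nonneg β) hc₀
  · have hpow : β ^ k ≤ 0 := hk.pow_nonpos hβ
    rw [hk.neg_pow]
    nlinarith [mul_nonneg (neg_nonneg.mpr hpow) (sub_nonneg.mpr hc)]

theorem sum_pow_card_mul_nonneg {ι : Type*} [Fintype ι] {c : Finset ι → ℝ}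
    (hc₀ : ∀ S, 0 ≤ c S) (hc : ∀ S, c S ≤ 2 * c ∅) {β₀ β : ℝ} (hβ₀ : -1 ≤ β₀)
    (hzero : 1 + (1 + β₀) ^ Fintype.card ι - (1 - β₀) ^ Fintype.card ι = 0) (hβ : β₀ ≤ β) :
    0 ≤ ∑ S : Finset ι, β ^ S.card * c S := by
  rcases le_or_gt 0 β with hβ0 | hβ0
  · exact sum_nonneg fun S _ => mul_nonneg (pow_nonneg hβ0 _) (hc₀ S)
  set n := Fintype.card ι
  set F := c ∅
  have hpoly : 0 ≤ 1 + (1 + β) ^ n - (1 - β) ^ n := by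
    have h₁ : (1 + β₀) ^ n ≤ (1 + β) ^ n := pow_le_pow_left₀ (by linarith) (by linarith) n
    have h₂ : (1 - β) ^ n ≤ (1 - β₀) ^ n := pow_le_pow_left₀ (by linarith) (by linarith) n
    linarith
  have hgap : F ≤ ∑ S : Finset ι, (β ^ S.card * c S - F * (β ^ S.card - (-β) ^ S.card)) := by
    simpa [F] using single_le_sum (fun S _ => sub_nonneg.mpr <|
      mul_pow_sub_neg_pow_le hβ0.le (hc₀ S) (hc S) S.card) (mem_univ (∅ : Finset ι))
  calc 0 ≤ F * (1 + (1 + β) ^ n - (1 - β) ^ n) := mul_nonneg (hc₀ ∅) hpoly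
    _ = F + F * ∑ S : Finset ι, (β ^ S.card - (-β) ^ S.card) := by
        rw [sum_sub_distrib, sum_pow_card_eq, sum_pow_card_eq]
        ring
    _ ≤ ∑ S : Finset ι, β ^ S.card * c S := by
        rw [mul_sum]
        rw [sum_sub_distrib] at hgap
        linarith

theorem werner_n_undistillable_of_ge_beta_zero_general
    (d N : ℕ) (β₀ : ℝ) (hβ₀₁ : -1 ≤ β₀)
    (hzero : 1 + (1 + β₀) ^ N - (1 - β₀) ^ N = 0) :
    ∀ β : ℝ, β₀ ≤ β →
      ∀ X : Matrix (Fin N → Fin d) (Fin N → Fin d) ℂ, X.rank ≤ 2 →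
        0 ≤ ∑ S : Finset (Fin N), β ^ S.card *
              ∑ a : {n // n ∈ Sᶜ} → Fin d, ∑ b : {n // n ∈ Sᶜ} → Fin d,
                ‖ptrace S X a b‖ ^ 2 := by
  intro β hβ X hX
  have hbound : ∀ S, (ptrace S X).frobeniusNormSq ≤ 2 * (ptrace ∅ X).frobeniusNormSq := fun S =>
    calc (ptrace S X).frobeniusNormSq ≤ X.rank * X.frobeniusNormSq :=
          frobeniusNormSq_ptrace_le_rank_mul S X
      _ ≤ 2 * (ptrace ∅ X).frobeniusNormSq := by
          rw [frobeniusNormSq_ptrace_empty]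
          gcongr
          · exact X.frobeniusNormSq_nonneg
          · exact_mod_cast hX
  exact sum_pow_card_mul_nonneg (fun S => (ptrace S X).frobeniusNormSq_nonneg) hbound hβ₀₁
    (by simpa using hzero) hβ

/-- If `β₀ ∈ [-1, 0]` is a zero of `1 + (1+β)^N - (1-β)^N`, then for all
`β ≥ β₀` and every rank-≤2 matrix `X`, `∑_S β^{|S|} ‖Tr_S X‖_F² ≥ 0`
(the Werner state is `N`-undistillable). -/
theorem werner_n_undistillable_of_ge_beta_zero
    (d N : ℕ) (hd : 1 ≤ d) (hN : 1 ≤ N) (β₀ : ℝ) (hβ₀₁ : -1 ≤ β₀) (hβ₀₂ : β₀ ≤ 0)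
    (hzero : 1 + (1 + β₀) ^ N - (1 - β₀) ^ N = 0) :
    ∀ β : ℝ, β₀ ≤ β →
      ∀ X : Matrix (Fin N → Fin d) (Fin N → Fin d) ℂ, X.rank ≤ 2 →
        0 ≤ ∑ S : Finset (Fin N), β ^ S.card *
              ∑ a : {n // n ∈ Sᶜ} → Fin d, ∑ b : {n // n ∈ Sᶜ} → Fin d,
                ‖ptrace S X a b‖ ^ 2 :=
  werner_n_undistillable_of_ge_beta_zero_general d N β₀ hβ₀₁ hzero
end

section
/- Let d ≥ 1, N ≥ 1, S : Finset (Fin N), and let X : Matrix (Fin N → Fin d) (Fin N → Fin d) ℂ with Matrix.rank X ≤ 2. Then ‖Tr_S(X)‖_F² ≤ 2 · ‖X‖_F². -/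
section

open scoped Matrix Matrix.Norms.Frobenius

namespace Matrix

variable {m n α 𝕜 : Type*} [Fintype m] [Fintype n]

theorem frobenius_norm_sq_eq_sum [SeminormedAddCommGroup α] (A : Matrix m n α) :
    ‖A‖ ^ 2 = ∑ i, ∑ j, ‖A i j‖ ^ 2 := by
  change ‖WithLp.toLp 2 fun i => WithLp.toLp 2 (A i)‖ ^ 2 = _
  simp only [PiLp.norm_sq_eq_of_L2]

theorem exists_orthonormal_sum_vecMulVec [RCLike 𝕜] (X : Matrix m n 𝕜) :
    ∃ (u : Fin X.rank → EuclideanSpace 𝕜 m) (c : Fin X.rank → EuclideanSpace 𝕜 n),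
      Orthonormal 𝕜 u ∧ X = ∑ i, vecMulVec (u i) (c i) ∧ ∑ i, ‖c i‖ ^ 2 = ‖X‖ ^ 2 := by
  classical
  set W := Submodule.span 𝕜 (Set.range fun j => WithLp.toLp 2 (Xᵀ j))
  have hW : Module.finrank 𝕜 W = X.rank := by
    rw [rank_eq_finrank_span_cols,
      ← LinearEquiv.finrank_map_eq (WithLp.linearEquiv 2 𝕜 (m → 𝕜)).symm, Submodule.map_span,
      ← Set.range_comp]
    rfl
  let bas := (stdOrthonormalBasis 𝕜 W).reindex (finCongr hW)
  let col (j : n) : W := ⟨WithLp.toLp 2 (Xᵀ j), Submodule.subset_span ⟨j, rfl⟩⟩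
  refine ⟨fun i => bas i, fun i => WithLp.toLp 2 fun j => bas.repr (col j) i,
    bas.orthonormal.comp_linearIsometry W.subtypeₗᵢ, ?_, ?_⟩
  · ext a j
    have h := congrArg (fun v : W => (v : EuclideanSpace 𝕜 m) a) (bas.sum_repr (col j))
    simp only [Submodule.coe_sum, Submodule.coe_smul, WithLp.ofLp_sum, Finset.sum_apply,
      PiLp.smul_apply, smul_eq_mul] at h
    simp only [sum_apply, vecMulVec_apply]
    exact h.symm.trans (Finset.sum_congr rfl fun _ _ => mul_comm _ _)
  · calc ∑ i, ‖WithLp.toLp 2 fun j => bas.repr (col j) i‖ ^ 2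
        = ∑ j, ‖bas.repr (col j)‖ ^ 2 := by
          simp only [EuclideanSpace.norm_sq_eq]
          exact Finset.sum_comm
      _ = ∑ j, ∑ a, ‖X a j‖ ^ 2 := by
          refine Finset.sum_congr rfl fun j _ => ?_
          rw [LinearIsometryEquiv.norm_map, Submodule.coe_norm, EuclideanSpace.norm_sq_eq]
          rfl
      _ = ‖X‖ ^ 2 := by rw [frobenius_norm_sq_eq_sum, Finset.sum_comm]

end Matrix

namespace PartialTrace

variable {N d : ℕ} (S : Finset (Fin N))

def merge (a : {n // n ∈ Sᶜ} → Fin d) (e : {n // n ∈ S} → Fin d) : Fin N → Fin d :=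
  fun n => if h : n ∈ S then e ⟨n, h⟩ else a ⟨n, Finset.mem_compl.mpr h⟩

def mergeEquiv : (({n // n ∈ Sᶜ} → Fin d) × ({n // n ∈ S} → Fin d)) ≃ (Fin N → Fin d) where
  toFun p := merge S p.1 p.2
  invFun f := (fun n => f n, fun n => f n)
  left_inv p := by
    ext n
    · simp [merge, Finset.mem_compl.mp n.2]
    · simp [merge, n.2]
  right_inv f := by
    funext n
    simp only [merge]
    split <;> rfl

theorem sum_comp_merge {M : Type*} [AddCommMonoid M] (F : (Fin N → Fin d) → M) :
    ∑ a, ∑ e, F (merge S a e) = ∑ f, F f := by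
  rw [← Fintype.sum_prod_type']
  exact Fintype.sum_equiv (mergeEquiv S) _ F fun _ => rfl

theorem ptrace_apply (X : Matrix (Fin N → Fin d) (Fin N → Fin d) ℂ) (a b) :
    ptrace S X a b = ∑ e, X (merge S a e) (merge S b e) :=
  rfl

theorem ptrace_sum {ι : Type*} (s : Finset ι) (X : ι → Matrix (Fin N → Fin d) (Fin N → Fin d) ℂ) :
    ptrace S (∑ i ∈ s, X i) = ∑ i ∈ s, ptrace S (X i) := by
  ext a b
  simp only [ptrace_apply, Matrix.sum_apply]
  exact Finset.sum_comm

/-- A vector of the full system as a matrix across the cut `Sᶜ | S`; its singular values are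
the Schmidt coefficients of the vector. -/
def reshape (u : (Fin N → Fin d) → ℂ) : Matrix ({n // n ∈ Sᶜ} → Fin d) ({n // n ∈ S} → Fin d) ℂ :=
  Matrix.of fun a e => u (merge S a e)

theorem frobenius_norm_reshape (u : EuclideanSpace ℂ (Fin N → Fin d)) :
    ‖reshape S u‖ = ‖u‖ := by
  rw [← sq_eq_sq₀ (norm_nonneg _) (norm_nonneg _), Matrix.frobenius_norm_sq_eq_sum,
    EuclideanSpace.norm_sq_eq, ← sum_comp_merge S]
  rfl

theorem ptrace_vecMulVec (u v : (Fin N → Fin d) → ℂ) :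
    ptrace S (Matrix.vecMulVec u v) = reshape S u * (reshape S v)ᵀ :=
  rfl

theorem frobenius_norm_ptrace_vecMulVec_le (u v : EuclideanSpace ℂ (Fin N → Fin d)) :
    ‖ptrace S (Matrix.vecMulVec u v)‖ ≤ ‖u‖ * ‖v‖ := by
  rw [ptrace_vecMulVec, ← frobenius_norm_reshape S u, ← frobenius_norm_reshape S v,
    ← Matrix.frobenius_norm_transpose (reshape S v)]
  exact Matrix.frobenius_norm_mul _ _

theorem frobenius_norm_ptrace_sq_le_rank_mul (X : Matrix (Fin N → Fin d) (Fin N → Fin d) ℂ) :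
    ‖ptrace S X‖ ^ 2 ≤ X.rank * ‖X‖ ^ 2 := by
  obtain ⟨u, c, hu, hX, hc⟩ := X.exists_orthonormal_sum_vecMulVec
  calc ‖ptrace S X‖ ^ 2 = ‖∑ i, ptrace S (Matrix.vecMulVec (u i) (c i))‖ ^ 2 := by
        rw [← ptrace_sum, ← hX]
    _ ≤ (∑ i, ‖ptrace S (Matrix.vecMulVec (u i) (c i))‖) ^ 2 := by
        gcongr
        exact norm_sum_le _ _
    _ ≤ (∑ i, ‖c i‖) ^ 2 := by
        gcongr with i
        simpa [hu.1 i] using frobenius_norm_ptrace_vecMulVec_le S (u i) (c i)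
    _ ≤ (Finset.univ : Finset (Fin X.rank)).card * ∑ i, ‖c i‖ ^ 2 := sq_sum_le_card_mul_sum_sq
    _ = X.rank * ‖X‖ ^ 2 := by rw [hc, Finset.card_univ, Fintype.card_fin]

end PartialTrace

end

theorem ptrace_frobenius_sq_le_two_mul_general
    (d N : ℕ) (S : Finset (Fin N))
    (X : Matrix (Fin N → Fin d) (Fin N → Fin d) ℂ)
    (hrank : X.rank ≤ 2) :
    (∑ a : {n // n ∈ Sᶜ} → Fin d, ∑ b : {n // n ∈ Sᶜ} → Fin d, ‖ptrace S X a b‖ ^ 2)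
      ≤ 2 * ∑ a : Fin N → Fin d, ∑ b : Fin N → Fin d, ‖X a b‖ ^ 2 := by
  rw [← Matrix.frobenius_norm_sq_eq_sum, ← Matrix.frobenius_norm_sq_eq_sum]
  refine (PartialTrace.frobenius_norm_ptrace_sq_le_rank_mul S X).trans ?_
  gcongr
  exact_mod_cast hrank

/-- For any rank-≤2 matrix `X` and any finset `S` of subsystems,
`‖Tr_S X‖_F² ≤ 2 ‖X‖_F²`. -/
theorem ptrace_frobenius_sq_le_two_mul
    (d N : ℕ) (hd : 1 ≤ d) (hN : 1 ≤ N) (S : Finset (Fin N))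
    (X : Matrix (Fin N → Fin d) (Fin N → Fin d) ℂ)
    (hrank : X.rank ≤ 2) :
    (∑ a : {n // n ∈ Sᶜ} → Fin d, ∑ b : {n // n ∈ Sᶜ} → Fin d, ‖ptrace S X a b‖ ^ 2)
      ≤ 2 * ∑ a : Fin N → Fin d, ∑ b : Fin N → Fin d, ‖X a b‖ ^ 2 :=
  ptrace_frobenius_sq_le_two_mul_general d N S X hrank
end

section
/- Let d ≥ 1 and let X : Matrix (Fin d × Fin d) (Fin d × Fin d) ℂ with Matrix.rank X ≤ 1. Then ‖Tr₁(X)‖_F² ≤ ‖X‖_F² and ‖Tr₂(X)‖_F² ≤ ‖X‖_F². -/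
open Finset

lemma rank_le_one_decomp {m n : Type*} [Fintype m] [Fintype n] [DecidableEq n]
    (X : Matrix m n ℂ) (hrank : X.rank ≤ 1) :
    ∃ w : m → ℂ, ∃ x : n → ℂ, ∀ p q, X p q = x q * w p := by
  rw [Matrix.rank] at hrank
  obtain ⟨v₀, hv₀⟩ := finrank_le_one_iff.mp hrank
  choose r hr using fun q =>
    hv₀ ⟨X.mulVec (Pi.single q 1), LinearMap.mem_range_self X.mulVecLin _⟩
  refine ⟨fun p => (v₀ : m → ℂ) p, r, fun p q => ?_⟩
  have := congrArg (fun v : LinearMap.range X.mulVecLin => (v : m → ℂ) p) (hr q)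
  simp only [Matrix.mulVec_single, mul_one] at this
  simpa using this.symm

lemma cs_norm (ι : Type*) [Fintype ι] (a b : ι → ℂ) :
    ‖∑ i, a i * b i‖ ^ 2 ≤ (∑ i, ‖a i‖ ^ 2) * (∑ i, ‖b i‖ ^ 2) := by
  calc ‖∑ i, a i * b i‖ ^ 2 ≤ (∑ i, ‖a i‖ * ‖b i‖) ^ 2 := by
        apply pow_le_pow_left₀ (norm_nonneg _)
        exact (norm_sum_le _ _).trans (le_of_eq (by simp [norm_mul]))
    _ ≤ (∑ i, ‖a i‖ ^ 2) * (∑ i, ‖b i‖ ^ 2) :=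
        Finset.sum_mul_sq_le_sq_mul_sq _ _ _


lemma factor_sum {d : ℕ} (a b : Fin d × Fin d → ℝ) :
    ∑ j : Fin d, ∑ l : Fin d, (∑ i : Fin d, a (i, l)) * (∑ i : Fin d, b (i, j))
      = (∑ p : Fin d × Fin d, b p) * ∑ q : Fin d × Fin d, a q := by
  have h1 : ∑ q : Fin d × Fin d, a q = ∑ l : Fin d, ∑ i : Fin d, a (i, l) := by
    rw [Fintype.sum_prod_type]; exact Finset.sum_comm
  have h2 : ∑ p : Fin d × Fin d, b p = ∑ j : Fin d, ∑ i : Fin d, b (i, j) := by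
    rw [Fintype.sum_prod_type]; exact Finset.sum_comm
  rw [h1, h2]
  simp_rw [← Finset.sum_mul, ← Finset.mul_sum]
  rw [mul_comm]

/-- For a rank-≤1 matrix `X : Matrix (Fin d × Fin d) (Fin d × Fin d) ℂ`,
both partial traces satisfy `‖Tr₁ X‖_F² ≤ ‖X‖_F²` and `‖Tr₂ X‖_F² ≤ ‖X‖_F²`. -/
theorem ptrace_frobenius_sq_le_of_rank_one
    (d : ℕ) (hd : 1 ≤ d)
    (X : Matrix (Fin d × Fin d) (Fin d × Fin d) ℂ)
    (hrank : X.rank ≤ 1) :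
    (∑ j : Fin d, ∑ l : Fin d, ‖∑ i : Fin d, X (i, j) (i, l)‖ ^ 2
      ≤ ∑ p : Fin d × Fin d, ∑ q : Fin d × Fin d, ‖X p q‖ ^ 2) ∧
    (∑ i : Fin d, ∑ k : Fin d, ‖∑ j : Fin d, X (i, j) (k, j)‖ ^ 2
      ≤ ∑ p : Fin d × Fin d, ∑ q : Fin d × Fin d, ‖X p q‖ ^ 2) := by
  obtain ⟨w, x, hX⟩ := rank_le_one_decomp X hrank
  have hRHS : ∑ p : Fin d × Fin d, ∑ q : Fin d × Fin d, ‖X p q‖ ^ 2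
      = (∑ p : Fin d × Fin d, ‖w p‖ ^ 2) * (∑ q : Fin d × Fin d, ‖x q‖ ^ 2) := by
    simp_rw [hX, norm_mul, mul_pow]
    rw [Finset.sum_comm, ← Finset.sum_mul_sum, mul_comm]
  constructor
  · calc ∑ j : Fin d, ∑ l : Fin d, ‖∑ i : Fin d, X (i, j) (i, l)‖ ^ 2
        ≤ ∑ j : Fin d, ∑ l : Fin d,
            (∑ i : Fin d, ‖x (i, l)‖ ^ 2) * (∑ i : Fin d, ‖w (i, j)‖ ^ 2) := by
          refine Finset.sum_le_sum fun j _ => Finset.sum_le_sum fun l _ => ?_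
          simp_rw [hX]
          exact cs_norm _ (fun i => x (i, l)) (fun i => w (i, j))
      _ = ∑ p : Fin d × Fin d, ∑ q : Fin d × Fin d, ‖X p q‖ ^ 2 := by
          rw [hRHS]; exact factor_sum (fun q => ‖x q‖ ^ 2) (fun p => ‖w p‖ ^ 2)
  · calc ∑ i : Fin d, ∑ k : Fin d, ‖∑ j : Fin d, X (i, j) (k, j)‖ ^ 2
        ≤ ∑ i : Fin d, ∑ k : Fin d,
            (∑ j : Fin d, ‖x (k, j)‖ ^ 2) * (∑ j : Fin d, ‖w (i, j)‖ ^ 2) := by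
          refine Finset.sum_le_sum fun i _ => Finset.sum_le_sum fun k _ => ?_
          simp_rw [hX]
          exact cs_norm _ (fun j => x (k, j)) (fun j => w (i, j))
      _ = ∑ p : Fin d × Fin d, ∑ q : Fin d × Fin d, ‖X p q‖ ^ 2 := by
          rw [hRHS]
          have h1 : ∑ q : Fin d × Fin d, ‖x q‖ ^ 2
              = ∑ k : Fin d, ∑ j : Fin d, ‖x (k, j)‖ ^ 2 := Fintype.sum_prod_type _
          have h2 : ∑ p : Fin d × Fin d, ‖w p‖ ^ 2
              = ∑ i : Fin d, ∑ j : Fin d, ‖w (i, j)‖ ^ 2 := Fintype.sum_prod_type _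
          rw [h1, h2]
          simp_rw [← Finset.sum_mul, ← Finset.mul_sum]
          rw [mul_comm]
end

section
/- Let d ≥ 1, N ≥ 1, β ∈ ℝ, and for matrices A, B : Matrix (Fin N → Fin d) (Fin N → Fin d) ℂ define f(A,B) = Σ over S : Finset (Fin N) of β^{S.card} · Σ_{a,b} conj((Tr_S A) a b) · ((Tr_S B) a b), so that f(A,A) = Σ_S β^{S.card} ‖Tr_S A‖_F² is real. Then the following are equivalent: (i) for every X : Matrix (Fin N → Fin d) (Fin N → Fin d) ℂ with Matrix.rank X ≤ 2, 0 ≤ f(X,X); (ii) for all vectors u₁, v₁, u₂, v₂ : (Fin N → Fin d) → ℂ with Σ_i conj(u₁ i) · u₂ i = 0 and Σ_j conj(v₁ j) · v₂ j = 0, setting A i j = u₁ i · conj(v₁ j) and B i j = u₂ i · conj(v₂ j), one has 0 ≤ f(A,A) and (Re f(A,B))² ≤ f(A,A) · f(B,B). -/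
/-! Write `q(X) = Re f(X, X)`. Since `f` is sesquilinear and Hermitian,
`q(A + tB) = q(A) + 2t Re f(A, B) + t² q(B)` for real `t`. If `A`, `B` have rank one, then
`A + tB` has rank at most two, so (i) makes this quadratic in `t` nonnegative, whence `q(A) ≥ 0`
and its discriminant is nonpositive. Conversely, the singular value decomposition writes a matrix
of rank at most two as `A + B` with `A`, `B` as in (ii); applying (ii) to `(A, B)` and to `(B, A)`
gives `q(A), q(B) ≥ 0` and `|Re f(A, B)| ≤ √(q(A) q(B)) ≤ (q(A) + q(B)) / 2`, so `q(A + B) ≥ 0`. -/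

open scoped ComplexConjugate

/-- The sesquilinear form `f(A,B) = ∑_S β^{|S|} Tr[(Tr_S A)ᴴ (Tr_S B)]`. -/
noncomputable def fform {N d : ℕ} (β : ℝ)
    (A B : Matrix (Fin N → Fin d) (Fin N → Fin d) ℂ) : ℂ :=
  ∑ S : Finset (Fin N), (β : ℂ) ^ S.card *
    ∑ a : {n // n ∈ Sᶜ} → Fin d, ∑ b : {n // n ∈ Sᶜ} → Fin d,
      conj (ptrace S A a b) * ptrace S B a b

open scoped Matrix

namespace Matrix

variable {m n k : Type*}

theorem rank_add_le {K : Type*} [Field K] [Fintype n] (A B : Matrix m n K) :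
    (A + B).rank ≤ A.rank + B.rank := by
  unfold rank
  rw [mulVecLin_add]
  exact (Submodule.finrank_mono (LinearMap.range_add_le _ _)).trans
    (Submodule.finrank_add_le_finrank_add_finrank _ _)

theorem rank_vecMulVec_add_vecMulVec_le {K : Type*} [Field K] [Fintype n]
    (u₁ u₂ : m → K) (v₁ v₂ : n → K) :
    (vecMulVec u₁ v₁ + vecMulVec u₂ v₂).rank ≤ 2 :=
  (rank_add_le _ _).trans (add_le_add (rank_vecMulVec_le _ _) (rank_vecMulVec_le _ _))

section StarRing

variable {α : Type*} [NonUnitalNonAssocSemiring α] [StarRing α]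

theorem conjTranspose_mul_self_apply [Fintype m] (P : Matrix m n α) (i j : n) :
    (Pᴴ * P) i j = star (Pᵀ i) ⬝ᵥ Pᵀ j := rfl

theorem mul_conjTranspose_eq_sum_vecMulVec [Fintype n] (P : Matrix m n α) (Q : Matrix k n α) :
    P * Qᴴ = ∑ i, vecMulVec (Pᵀ i) (star (Qᵀ i)) := by
  ext a b
  simp [mul_apply, sum_apply, vecMulVec_apply]

end StarRing

variable {𝕜 : Type*} [RCLike 𝕜]

open scoped ComplexOrder in
/-- The singular value decomposition: for `U` an eigenbasis of `Xᴴ X`, the columns of `X U` are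
orthogonal, their squared norms being the eigenvalues. -/
theorem exists_sum_vecMulVec_orthogonal [Fintype m] [Fintype n] [DecidableEq n]
    (X : Matrix m n 𝕜) :
    ∃ (u : n → m → 𝕜) (v : n → n → 𝕜),
      Pairwise (fun i j => star (u i) ⬝ᵥ u j = 0) ∧
      Pairwise (fun i j => star (v i) ⬝ᵥ v j = 0) ∧
      Nat.card {i // u i ≠ 0} ≤ X.rank ∧
      X = ∑ i, vecMulVec (u i) (star (v i)) := by
  have hH : (Xᴴ * X).IsHermitian := isHermitian_conjTranspose_mul_self X
  set U : Matrix n n 𝕜 := (hH.eigenvectorUnitary : Matrix n n 𝕜)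
  have hUU : Uᴴ * U = 1 := Unitary.coe_star_mul_self hH.eigenvectorUnitary
  have hUU' : U * Uᴴ = 1 := Unitary.coe_mul_star_self hH.eigenvectorUnitary
  have hgram : (X * U)ᴴ * (X * U) = diagonal (RCLike.ofReal ∘ hH.eigenvalues) := by
    rw [← hH.conjStarAlgAut_star_eigenvectorUnitary, Unitary.conjStarAlgAut_apply]
    simp only [conjTranspose_mul, Matrix.mul_assoc, Unitary.coe_star, star_star]
    rfl
  refine ⟨(X * U)ᵀ, Uᵀ, fun i j hij => ?_, fun i j hij => ?_, ?_, ?_⟩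
  · exact (conjTranspose_mul_self_apply _ i j).symm.trans (by rw [hgram, diagonal_apply_ne _ hij])
  · exact (conjTranspose_mul_self_apply _ i j).symm.trans (by rw [hUU, one_apply_ne hij])
  · rw [← rank_conjTranspose_mul_self, hH.rank_eq_card_non_zero_eigs, ← Nat.card_eq_fintype_card]
    refine Nat.card_le_card_of_injective (fun i => ⟨i.1, fun hzero => i.2 ?_⟩) fun i j h => ?_
    · rw [← dotProduct_star_self_eq_zero, ← conjTranspose_mul_self_apply, hgram]
      simp [hzero]
    · simpa [Subtype.ext_iff] using h
  · rw [← mul_conjTranspose_eq_sum_vecMulVec, Matrix.mul_assoc, hUU', Matrix.mul_one]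

theorem exists_vecMulVec_add_vecMulVec_of_rank_le_two [Fintype m] [Fintype n] [DecidableEq n]
    (X : Matrix m n 𝕜) (hX : X.rank ≤ 2) :
    ∃ (u₁ u₂ : m → 𝕜) (v₁ v₂ : n → 𝕜), star u₁ ⬝ᵥ u₂ = 0 ∧ star v₁ ⬝ᵥ v₂ = 0 ∧
      X = vecMulVec u₁ (star v₁) + vecMulVec u₂ (star v₂) := by
  classical
  obtain ⟨u, v, hu, hv, hcard, hXsum⟩ := exists_sum_vecMulVec_orthogonal X
  set s := Finset.univ.filter (u · ≠ 0)
  have hs : s.card ≤ 2 := by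
    rw [← Fintype.card_subtype, ← Nat.card_eq_fintype_card]
    exact hcard.trans hX
  have hXs : X = ∑ i ∈ s, vecMulVec (u i) (star (v i)) := by
    rw [Finset.sum_filter_of_ne fun i _ => mt fun hui => by simp [hui], hXsum]
  obtain h0 | h1 | h2 : s.card = 0 ∨ s.card = 1 ∨ s.card = 2 := by omega
  · exact ⟨0, 0, 0, 0, by simp, by simp, by simpa [Finset.card_eq_zero.mp h0] using hXs⟩
  · obtain ⟨a, ha⟩ := Finset.card_eq_one.mp h1
    exact ⟨u a, 0, v a, 0, by simp, by simp, by simpa [ha] using hXs⟩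
  · obtain ⟨a, b, hab, hs2⟩ := Finset.card_eq_two.mp h2
    exact ⟨u a, u b, v a, v b, hu hab, hv hab, by rwa [hs2, Finset.sum_pair hab] at hXs⟩

end Matrix

theorem nonneg_and_sq_le_mul_of_forall_quadratic_nonneg {a b c : ℝ}
    (h : ∀ t : ℝ, 0 ≤ a + 2 * b * t + c * t ^ 2) : 0 ≤ a ∧ b ^ 2 ≤ a * c := by
  have hdiscrim := discrim_le_zero fun t =>
    (h t).trans_eq (by ring : _ = c * (t * t) + 2 * b * t + a)
  rw [discrim] at hdiscrim
  exact ⟨by simpa using h 0, by linarith⟩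

theorem add_two_mul_add_nonneg_of_sq_le_mul {a b c : ℝ} (ha : 0 ≤ a) (hc : 0 ≤ c)
    (h : b ^ 2 ≤ a * c) : 0 ≤ a + 2 * b + c := by
  nlinarith [sq_nonneg (a - c), sq_nonneg (a + c), sq_abs b, abs_nonneg b]

section

variable {N d : ℕ} (β : ℝ) (A B C : Matrix (Fin N → Fin d) (Fin N → Fin d) ℂ) (c : ℂ)

theorem ptrace_add (S : Finset (Fin N)) : ptrace S (A + B) = ptrace S A + ptrace S B := by
  ext a b
  simp [ptrace, Finset.sum_add_distrib]

theorem ptrace_smul (S : Finset (Fin N)) : ptrace S (c • A) = c • ptrace S A := by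
  ext a b
  simp [ptrace, Finset.mul_sum]

theorem fform_add_left : fform β (A + B) C = fform β A C + fform β B C := by
  simp only [fform, ptrace_add, Matrix.add_apply, map_add, add_mul, Finset.sum_add_distrib,
    mul_add]

theorem fform_add_right : fform β A (B + C) = fform β A B + fform β A C := by
  simp only [fform, ptrace_add, Matrix.add_apply, mul_add, Finset.sum_add_distrib]

theorem fform_smul_left : fform β (c • A) B = conj c * fform β A B := by
  simp only [fform, ptrace_smul, Matrix.smul_apply, smul_eq_mul, map_mul, Finset.mul_sum]
  simp only [mul_left_comm, mul_assoc]

theorem fform_smul_right : fform β A (c • B) = c * fform β A B := by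
  simp only [fform, ptrace_smul, Matrix.smul_apply, smul_eq_mul, Finset.mul_sum]
  simp only [mul_left_comm]

theorem conj_fform : conj (fform β A B) = fform β B A := by
  simp only [fform, map_sum, map_mul, map_pow, Complex.conj_ofReal, Complex.conj_conj, mul_comm]

theorem re_fform_add_ofReal_smul (t : ℝ) :
    (fform β (A + (t : ℂ) • B) (A + (t : ℂ) • B)).re =
      (fform β A A).re + 2 * (fform β A B).re * t + (fform β B B).re * t ^ 2 := by
  have hBA : (fform β B A).re = (fform β A B).re := by rw [← conj_fform, Complex.conj_re]
  simp only [fform_add_left, fform_add_right, fform_smul_left, fform_smul_right,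
    Complex.conj_ofReal, Complex.add_re, Complex.re_ofReal_mul, hBA]
  ring

end

theorem n_undistillability_iff_rank_one_cauchy_schwarz_general
    (d N : ℕ) (β : ℝ) :
    (∀ X : Matrix (Fin N → Fin d) (Fin N → Fin d) ℂ, X.rank ≤ 2 →
        0 ≤ (fform β X X).re) ↔
      (∀ u₁ v₁ u₂ v₂ : (Fin N → Fin d) → ℂ,
        (∑ i : Fin N → Fin d, conj (u₁ i) * u₂ i = 0) →
        (∑ j : Fin N → Fin d, conj (v₁ j) * v₂ j = 0) →
        (0 ≤ (fform β (Matrix.of fun i j => u₁ i * conj (v₁ j))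
                      (Matrix.of fun i j => u₁ i * conj (v₁ j))).re) ∧
        ((fform β (Matrix.of fun i j => u₁ i * conj (v₁ j))
                  (Matrix.of fun i j => u₂ i * conj (v₂ j))).re ^ 2 ≤
          (fform β (Matrix.of fun i j => u₁ i * conj (v₁ j))
                   (Matrix.of fun i j => u₁ i * conj (v₁ j))).re *
          (fform β (Matrix.of fun i j => u₂ i * conj (v₂ j))
                   (Matrix.of fun i j => u₂ i * conj (v₂ j))).re)) := by
  constructor
  · intro h u₁ v₁ u₂ v₂ _ _
    have hquad (t : ℝ) := re_fform_add_ofReal_smul β (Matrix.vecMulVec u₁ (star v₁))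
      (Matrix.vecMulVec u₂ (star v₂)) t ▸ h _ (by
        rw [← Matrix.smul_vecMulVec]
        exact Matrix.rank_vecMulVec_add_vecMulVec_le _ _ _ _)
    exact nonneg_and_sq_le_mul_of_forall_quadratic_nonneg hquad
  · intro h X hX
    obtain ⟨u₁, u₂, v₁, v₂, hu, hv, rfl⟩ := Matrix.exists_vecMulVec_add_vecMulVec_of_rank_le_two X hX
    obtain ⟨hA, hAB⟩ := h u₁ v₁ u₂ v₂ hu hv
    have hB := (h u₂ v₂ u₁ v₁ ((Matrix.star_dotProduct u₂ u₁).trans (by rw [hu, star_zero]))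
      ((Matrix.star_dotProduct v₂ v₁).trans (by rw [hv, star_zero]))).1
    have hsum := re_fform_add_ofReal_smul β (Matrix.vecMulVec u₁ (star v₁))
      (Matrix.vecMulVec u₂ (star v₂)) 1
    rw [Complex.ofReal_one, one_smul, mul_one, one_pow, mul_one] at hsum
    exact hsum ▸ add_two_mul_add_nonneg_of_sq_le_mul hA hB hAB

/-- Nonnegativity of `f(X,X)` on all rank-≤2 matrices is equivalent to
the Cauchy–Schwarz-type inequality for the rank-one matrices `A = u₁ v₁ᴴ`, `B = u₂ v₂ᴴ`
built from pairs of orthogonal vectors. -/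
theorem n_undistillability_iff_rank_one_cauchy_schwarz
    (d N : ℕ) (hd : 1 ≤ d) (hN : 1 ≤ N) (β : ℝ) :
    (∀ X : Matrix (Fin N → Fin d) (Fin N → Fin d) ℂ, X.rank ≤ 2 →
        0 ≤ (fform β X X).re) ↔
      (∀ u₁ v₁ u₂ v₂ : (Fin N → Fin d) → ℂ,
        (∑ i : Fin N → Fin d, conj (u₁ i) * u₂ i = 0) →
        (∑ j : Fin N → Fin d, conj (v₁ j) * v₂ j = 0) →
        (0 ≤ (fform β (Matrix.of fun i j => u₁ i * conj (v₁ j))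
                      (Matrix.of fun i j => u₁ i * conj (v₁ j))).re) ∧
        ((fform β (Matrix.of fun i j => u₁ i * conj (v₁ j))
                  (Matrix.of fun i j => u₂ i * conj (v₂ j))).re ^ 2 ≤
          (fform β (Matrix.of fun i j => u₁ i * conj (v₁ j))
                   (Matrix.of fun i j => u₁ i * conj (v₁ j))).re *
          (fform β (Matrix.of fun i j => u₂ i * conj (v₂ j))
                   (Matrix.of fun i j => u₂ i * conj (v₂ j))).re)) :=
  n_undistillability_iff_rank_one_cauchy_schwarz_general d N β
end

section
/- Let d ≥ 2, let β = -1/2, and let y = z : Fin d × Fin d → ℝ be the indicator of the single pair (0,1) (i.e., y(i,j) = 1 if i = 0 and j = 1, else 0). With f and g defined as follows: for w, x, y', z' : Fin d × Fin d → ℝ, f(w,x;y',z') = (Σ_{i,j} w(i,j)·y'(i,j)) · (Σ_{k,l} x(k,l)·z'(k,l)) + β · [ Σ_{i,k} (Σ_j w(i,j)·x(k,j)) · (Σ_j y'(i,j)·z'(k,j)) + Σ_{j,l} (Σ_i w(i,j)·x(i,l)) · (Σ_i y'(i,j)·z'(i,l)) ] + β² · (Σ_{i,j} w(i,j)·x(i,j))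 · (Σ_{i,j} y'(i,j)·z'(i,j)), and g(w,x) = f(w,x;w,x) · f(y,z;y,z) - f(w,x;y,z)², the function g : ((Fin d × Fin d) → ℝ) × ((Fin d × Fin d) → ℝ) → ℝ is not convex on the whole space, i.e., ¬ ConvexOn ℝ Set.univ g. -/
/-- The real bilinear-type function
`f(w,x;y',z') = Tr(CᵀD) + β(Tr(C₁ᵀD₁) + Tr(C₂ᵀD₂)) + β² Tr(C) Tr(D)` for the rank-one
matrices `C = w xᵀ`, `D = y' z'ᵀ`. -/
noncomputable def fWerner (d : ℕ) (β : ℝ) (w x y' z' : Fin d × Fin d → ℝ) : ℝ :=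
  (∑ i : Fin d, ∑ j : Fin d, w (i, j) * y' (i, j)) *
    (∑ k : Fin d, ∑ l : Fin d, x (k, l) * z' (k, l))
  + β * ((∑ i : Fin d, ∑ k : Fin d,
            (∑ j : Fin d, w (i, j) * x (k, j)) * (∑ j : Fin d, y' (i, j) * z' (k, j)))
       + (∑ j : Fin d, ∑ l : Fin d,
            (∑ i : Fin d, w (i, j) * x (i, l)) * (∑ i : Fin d, y' (i, j) * z' (i, l))))
  + β ^ 2 * (∑ i : Fin d, ∑ j : Fin d, w (i, j) * x (i, j)) *
      (∑ i : Fin d, ∑ j : Fin d, y' (i, j) * z' (i, j))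

private noncomputable def eInd (d : ℕ) (a b : Fin d) : Fin d × Fin d → ℝ :=
  fun p => if p = (a, b) then 1 else 0

private noncomputable def mInd (d : ℕ) (a b : Fin d) : Fin d × Fin d → ℝ :=
  fun p => 1/2 * (if p = (a, b) then 1 else 0) + 1/2 * (if p = (a, a) then 1 else 0)

private lemma fW_ee (d : ℕ) (a b : Fin d) :
    fWerner d (-1/2) (eInd d a b) (eInd d a b) (eInd d a b) (eInd d a b) = 1/4 := by
  simp only [fWerner, eInd, Prod.ext_iff, ite_and, mul_ite, ite_mul, mul_one, one_mul, mul_zero,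
    zero_mul, Finset.sum_ite_eq, Finset.sum_ite_eq', Finset.mem_univ, if_true]
  norm_num

private lemma fW_aab (d : ℕ) (a b : Fin d) (hab : a ≠ b) :
    fWerner d (-1/2) (eInd d a a) (eInd d a a) (eInd d a b) (eInd d a b) = -1/4 := by
  simp only [fWerner, eInd, Prod.ext_iff, ite_and, mul_ite, ite_mul, mul_one, one_mul, mul_zero,
    zero_mul, Finset.sum_ite_eq, Finset.sum_ite_eq', Finset.mem_univ, if_true, hab, hab.symm,
    if_false]
  norm_num [hab, hab.symm]

private lemma fW_mm (d : ℕ) (a b : Fin d) (hab : a ≠ b) :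
    fWerner d (-1/2) (mInd d a b) (mInd d a b) (mInd d a b) (mInd d a b) = 1/16 := by
  simp only [fWerner, mInd, Prod.ext_iff, ite_and, mul_ite, ite_mul, mul_one, one_mul, mul_zero,
    zero_mul, add_mul, mul_add, Finset.sum_add_distrib,
    Finset.sum_ite_eq, Finset.sum_ite_eq', Finset.mem_univ, if_true, hab, hab.symm, if_false]
  norm_num [hab, hab.symm]

private lemma fW_me (d : ℕ) (a b : Fin d) (hab : a ≠ b) :
    fWerner d (-1/2) (mInd d a b) (mInd d a b) (eInd d a b) (eInd d a b) = 0 := by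
  simp only [fWerner, mInd, eInd, Prod.ext_iff, ite_and, mul_ite, ite_mul, mul_one, one_mul,
    mul_zero, zero_mul, add_mul, mul_add, Finset.sum_add_distrib,
    Finset.sum_ite_eq, Finset.sum_ite_eq', Finset.mem_univ, if_true, hab, hab.symm, if_false]
  norm_num [hab, hab.symm]

/-- With `β = -1/2` and `y = z` the indicator of the pair `(0,1)`,
the function `g(w,x) = f(w,x;w,x) f(y,z;y,z) - f(w,x;y,z)²` is not convex. -/
theorem g_not_convex
    (d : ℕ) (hd : 2 ≤ d)
    (y z : Fin d × Fin d → ℝ)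
    (hy : ∀ p : Fin d × Fin d,
      y p = if p = (⟨0, by omega⟩, ⟨1, by omega⟩) then 1 else 0)
    (hz : z = y) :
    ¬ ConvexOn ℝ Set.univ
      (fun p : ((Fin d × Fin d) → ℝ) × ((Fin d × Fin d) → ℝ) =>
        fWerner d (-1 / 2) p.1 p.2 p.1 p.2 * fWerner d (-1 / 2) y z y z
          - (fWerner d (-1 / 2) p.1 p.2 y z) ^ 2) := by
  intro h
  set a : Fin d := ⟨0, by omega⟩
  set b : Fin d := ⟨1, by omega⟩
  have hab : a ≠ b := by simp [a, b, Fin.ext_iff]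
  have hy' : y = eInd d a b := funext hy
  subst hz; subst hy'
  have key := h.2 (Set.mem_univ (eInd d a b, eInd d a b))
    (Set.mem_univ (eInd d a a, eInd d a a))
    (by norm_num : (0:ℝ) ≤ 1/2) (by norm_num : (0:ℝ) ≤ 1/2) (by norm_num)
  have hpt : ((1/2 : ℝ) • (eInd d a b, eInd d a b) + (1/2 : ℝ) • (eInd d a a, eInd d a a)
      : ((Fin d × Fin d) → ℝ) × ((Fin d × Fin d) → ℝ)) = (mInd d a b, mInd d a b) := by
    apply Prod.ext <;> funext p <;>
      simp [eInd, mInd, Pi.smul_apply, smul_eq_mul]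
  rw [hpt] at key
  simp only [fW_ee d a b, fW_ee d a a, fW_aab d a b hab, fW_mm d a b hab, fW_me d a b hab] at key
  norm_num at key
end

section
/- Let d ≥ 1 and let ρ : Matrix (Fin d × Fin d) (Fin d × Fin d) ℂ be positive semidefinite. For N ≥ 1 say that ρ satisfies the N-copy undistillability criterion if for every X : Matrix (Fin N → Fin d) (Fin N → Fin d) ℂ with Matrix.rank X ≤ 2, defining v : (Fin N → Fin d × Fin d) → ℂ by v f = X (fun n => (f n).1) (fun n => (f n).2), one has 0 ≤ Re ( Σ over f, g : Fin N → Fin d × Fin d of conj(v f) · (∏_{n} ρ^{T_A} (f n) (g n)) · (v g) ), where ρ^{T_A} (i,j) (k,l) = ρ (k,j) (i,l) is the partial transpose of ρ. If there is a function k : ℕ → ℕ, unbounded above (for every M there is an i with k i ≥ M), with k i ≥ 1 for all i, such that ρ satisfies the (k i)-copy undistillability criterion for every i, then ρ satisfies the N-copy undistillability criterion for every N ≥ 1. -/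
open scoped ComplexConjugate ComplexOrder

/-- `ρ` satisfies the `N`-copy undistillability criterion: for every rank-≤2 matrix `X`
(the state–operator image of a Schmidt-rank-≤2 vector `v`), the quadratic form of the
regrouped `(ρ^{T_A})^{⊗N}` on `v` is nonnegative.  Here
`ρ^{T_A} (i,j) (k,l) = ρ (k,j) (i,l)` is the partial transpose. -/
def NCopyUndistillable {d : ℕ} (ρ : Matrix (Fin d × Fin d) (Fin d × Fin d) ℂ)
    (N : ℕ) : Prop :=
  ∀ X : Matrix (Fin N → Fin d) (Fin N → Fin d) ℂ, X.rank ≤ 2 →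
    0 ≤ (∑ f : Fin N → Fin d × Fin d, ∑ g : Fin N → Fin d × Fin d,
      conj (X (fun n => (f n).1) (fun n => (f n).2)) *
        (∏ n : Fin N, ρ ((g n).1, (f n).2) ((f n).1, (g n).2)) *
        X (fun n => (g n).1) (fun n => (g n).2)).re

/-!
The embedding `X ↦ E_{p.1 p.2} ⊗ X` does not raise the rank, and the `(N + 1)`-copy form of
`E_{p.1 p.2} ⊗ X` is `ρ p p` times the `N`-copy form of `X`. For a positive semidefinite
`ρ ≠ 0` some diagonal entry `ρ p p` is positive, so `(N + 1)`-copy undistillability implies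
`N`-copy undistillability, and undistillability along an unbounded sequence of copy numbers
propagates down to every `N`. For `ρ = 0` the form vanishes as soon as `N ≥ 1`.
-/

lemma Matrix.PosSemidef.exists_diag_pos {n 𝕜 : Type*} [Fintype n] [RCLike 𝕜]
    {A : Matrix n n 𝕜} (hA : A.PosSemidef) (h : A ≠ 0) : ∃ i, 0 < A i i := by
  obtain ⟨i, -, hi⟩ := Finset.exists_ne_zero_of_sum_ne_zero (mt hA.trace_eq_zero_iff.mp h)
  exact ⟨i, hA.diag_nonneg.lt_of_ne' hi⟩

lemma Fin.sum_univ_pi_succ {α M : Type*} [Fintype α] [AddCommMonoid M] {N : ℕ}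
    (G : (Fin (N + 1) → α) → M) :
    ∑ f, G f = ∑ a, ∑ f, G (Fin.cons a f) := by
  rw [← (Fin.consEquiv fun _ => α).sum_comp, Fintype.sum_prod_type]
  rfl

lemma Complex.re_mul_nonneg_iff_of_pos {c : ℂ} (hc : 0 < c) (z : ℂ) :
    0 ≤ (c * z).re ↔ 0 ≤ z.re := by
  obtain ⟨hre, him⟩ := Complex.pos_iff.mp hc
  rw [Complex.mul_re, ← him, zero_mul, sub_zero]
  exact mul_nonneg_iff_of_pos_left hre

namespace Matrix

variable {α R : Type*} {N : ℕ}

/-- `E_{ij} ⊗ X`, the tuple coordinate `0` carrying the first tensor factor. -/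
def kronSingleCons [DecidableEq α] [Zero R] (i j : α) (X : Matrix (Fin N → α) (Fin N → α) R) :
    Matrix (Fin (N + 1) → α) (Fin (N + 1) → α) R :=
  fun f g => if f 0 = i ∧ g 0 = j then X (Fin.tail f) (Fin.tail g) else 0

lemma kronSingleCons_eq_diagonal_mul_submatrix_mul_diagonal [Fintype α] [DecidableEq α]
    [Semiring R] (i j : α) (X : Matrix (Fin N → α) (Fin N → α) R) :
    kronSingleCons i j X = diagonal (fun f => if f 0 = i then 1 else 0) *
      X.submatrix Fin.tail Fin.tail * diagonal (fun g => if g 0 = j then 1 else 0) := by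
  ext f g
  simp only [kronSingleCons, diagonal_mul, mul_diagonal, submatrix_apply, ite_and]
  split_ifs <;> simp

lemma rank_kronSingleCons_le [Fintype α] [DecidableEq α] [CommRing R] [StrongRankCondition R]
    (i j : α) (X : Matrix (Fin N → α) (Fin N → α) R) :
    (kronSingleCons i j X).rank ≤ X.rank := by
  rw [kronSingleCons_eq_diagonal_mul_submatrix_mul_diagonal]
  exact (rank_mul_le_left _ _).trans <| (rank_mul_le_right _ _).trans (rank_submatrix_le _ _ _)

end Matrix

section CopyForm

variable {α : Type*} [Fintype α] {N : ℕ}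

/-- `⟨v, (ρ^{T_A})^{⊗N} v⟩` for the vector `v f = X (f ·).1 (f ·).2`. -/
def copyForm (ρ : Matrix (α × α) (α × α) ℂ) (N : ℕ) (X : Matrix (Fin N → α) (Fin N → α) ℂ) :
    ℂ :=
  ∑ f : Fin N → α × α, ∑ g : Fin N → α × α,
    conj (X (fun n => (f n).1) (fun n => (f n).2)) *
      (∏ n : Fin N, ρ ((g n).1, (f n).2) ((f n).1, (g n).2)) *
      X (fun n => (g n).1) (fun n => (g n).2)

lemma copyForm_kronSingleCons [DecidableEq α] (ρ : Matrix (α × α) (α × α) ℂ) (p : α × α)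
    (X : Matrix (Fin N → α) (Fin N → α) ℂ) :
    copyForm ρ (N + 1) (X.kronSingleCons p.1 p.2) = ρ p p * copyForm ρ N X := by
  simp only [copyForm, Fin.sum_univ_pi_succ, Fin.prod_univ_succ, Matrix.kronSingleCons,
    Fin.cons_zero, Fin.tail_def, Fin.cons_succ, ← Prod.ext_iff]
  rw [Finset.sum_congr rfl fun a _ => Finset.sum_comm]
  simp only [apply_ite conj, map_zero, ite_mul, zero_mul, mul_ite, mul_zero, Finset.sum_ite_irrel,
    Finset.sum_const_zero, Finset.sum_ite_eq', Finset.mem_univ, ↓reduceIte, Prod.mk.eta,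
    Finset.mul_sum]
  exact Finset.sum_congr rfl fun _ _ => Finset.sum_congr rfl fun _ _ => by ring

lemma copyForm_zero_left (hN : N ≠ 0) (X : Matrix (Fin N → α) (Fin N → α) ℂ) :
    copyForm 0 N X = 0 := by
  simp [copyForm, hN]

end CopyForm

section Undistillable

variable {d N : ℕ} {ρ : Matrix (Fin d × Fin d) (Fin d × Fin d) ℂ}

lemma nCopyUndistillable_iff :
    NCopyUndistillable ρ N ↔ ∀ X : Matrix (Fin N → Fin d) (Fin N → Fin d) ℂ, X.rank ≤ 2 →
      0 ≤ (copyForm ρ N X).re :=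
  Iff.rfl

lemma nCopyUndistillable_zero (hN : N ≠ 0) : NCopyUndistillable (0 : Matrix (Fin d × Fin d) _ ℂ) N :=
  nCopyUndistillable_iff.mpr fun X _ => by rw [copyForm_zero_left hN, Complex.zero_re]

lemma NCopyUndistillable.of_succ {p : Fin d × Fin d} (hp : 0 < ρ p p)
    (h : NCopyUndistillable ρ (N + 1)) : NCopyUndistillable ρ N := by
  rw [nCopyUndistillable_iff] at h ⊢
  intro X hX
  have := h (X.kronSingleCons p.1 p.2) ((X.rank_kronSingleCons_le _ _).trans hX)
  rwa [copyForm_kronSingleCons, Complex.re_mul_nonneg_iff_of_pos hp] at this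

lemma NCopyUndistillable.of_le {p : Fin d × Fin d} (hp : 0 < ρ p p) {M : ℕ} (hNM : N ≤ M)
    (h : NCopyUndistillable ρ M) : NCopyUndistillable ρ N := by
  induction M, hNM using Nat.le_induction with
  | base => exact h
  | succ M _ ih => exact ih (h.of_succ hp)

end Undistillable

theorem undistillable_of_unbounded_sequence_general
    (d : ℕ)
    (ρ : Matrix (Fin d × Fin d) (Fin d × Fin d) ℂ)
    (hρ : ρ.PosSemidef)
    (k : ℕ → ℕ)
    (hk_unbdd : ∀ M : ℕ, ∃ i : ℕ, M ≤ k i)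
    (hcrit : ∀ i : ℕ, NCopyUndistillable ρ (k i)) :
    ∀ N : ℕ, 1 ≤ N → NCopyUndistillable ρ N := by
  intro N hN
  obtain rfl | hρ0 := eq_or_ne ρ 0
  · exact nCopyUndistillable_zero (Nat.one_le_iff_ne_zero.mp hN)
  obtain ⟨p, hp⟩ := hρ.exists_diag_pos hρ0
  obtain ⟨i, hi⟩ := hk_unbdd N
  exact (hcrit i).of_le hp hi

/-- If a positive semidefinite `ρ` satisfies the `(k i)`-copy
undistillability criterion along an unbounded sequence `k` of positive integers, then it
satisfies the `N`-copy undistillability criterion for every `N ≥ 1`. -/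
theorem undistillable_of_unbounded_sequence
    (d : ℕ) (hd : 1 ≤ d)
    (ρ : Matrix (Fin d × Fin d) (Fin d × Fin d) ℂ)
    (hρ : ρ.PosSemidef)
    (k : ℕ → ℕ)
    (hk_unbdd : ∀ M : ℕ, ∃ i : ℕ, M ≤ k i)
    (hk_pos : ∀ i : ℕ, 1 ≤ k i)
    (hcrit : ∀ i : ℕ, NCopyUndistillable ρ (k i)) :
    ∀ N : ℕ, 1 ≤ N → NCopyUndistillable ρ N :=
  undistillable_of_unbounded_sequence_general d ρ hρ k hk_unbdd hcrit
end
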